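/- arXiv:2605.13474 — 3 statements merged into one kernel-verified Lean document; each statement's English description precedes it below -/
import Mathlib

section
/- If a vertex u of a weighted graph with strictly positive edge weights has at least k+1 reachable vertices but does not have a (k,k+1)-ball, then u can reach exactly k of its closest neighbors within k hops, and moreover the shortest-path-with-fewest-hops tree connecting u to its k closest neighbors is a path. -/
open scoped ENNReal Classical

/-- A walk from `u` is recorded as the list `p` of vertices visited after `u`;
it ends at `v` if the last vertex of `u :: p` is `v`. -/
def WalkEnds {V : Type*} (u : V) (p : List V) (v : V) : Prop := p.getLastD u = v

/-- A weighted (di)graph on vertex set `V`: weight `⊤` means "no edge". -/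
structure WGraph (V : Type*) where
  w : V → V → ℝ≥0∞

namespace WGraph

variable {V : Type*} (G : WGraph V)

/-- Total weight of the walk `u :: p`. -/
noncomputable def walkWeight : V → List V → ℝ≥0∞
  | _, [] => 0
  | u, v :: p => G.w u v + walkWeight v p

/-- Weight distance. -/
noncomputable def dist (u v : V) : ℝ≥0∞ :=
  sInf {c | ∃ p : List V, WalkEnds u p v ∧ G.walkWeight u p = c}

/-- Hop distance: the minimum number of edges among minimum-weight walks;
`⊤` if `v` is unreachable from `u`. -/
noncomputable def hopdist (u v : V) : ℕ∞ :=
  if G.dist u v = ⊤ then ⊤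
  else sInf {n : ℕ∞ | ∃ p : List V, WalkEnds u p v ∧
    G.walkWeight u p = G.dist u v ∧ (p.length : ℕ∞) = n}

/-- The set of vertices reachable from `u`, other than `u` itself. -/
def Reach (u : V) : Set V := {v | v ≠ u ∧ G.dist u v ≠ ⊤}

/-- `S` is a `ρ`-closest neighbor set of `u`. -/
def IsClosest (ρ : ℕ) (u : V) (S : Set V) : Prop :=
  S ⊆ G.Reach u ∧ S.ncard = min (G.Reach u).ncard ρ ∧
    ∀ v ∈ S, ∀ x ∈ G.Reach u \ S, G.dist u v ≤ G.dist u x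

/-- `u` has a `(k,ρ)`-ball: some `ρ`-closest neighbor set lies within hop distance `k`. -/
def HasBall (k ρ : ℕ) (u : V) : Prop :=
  ∃ S : Set V, G.IsClosest ρ u S ∧ ∀ v ∈ S, G.hopdist u v ≤ (k : ℕ∞)

/-- `G` is a `(k,ρ)`-graph. -/
def IsKRhoGraph (k ρ : ℕ) : Prop := ∀ u, G.HasBall k ρ u

/-- `G` is undirected (symmetric weights). -/
def Symm : Prop := ∀ u v, G.w u v = G.w v u

/-- All edge weights are strictly positive (trivial for non-edges of weight `⊤`). -/
def Positive : Prop := ∀ u v, 0 < G.w u v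

/-- `(u,v)` is a (potential) shortcut: `v` is reachable from `u` and the hop distance
exceeds `1`. -/
def IsShortcut (u v : V) : Prop := G.dist u v ≠ ⊤ ∧ 1 < G.hopdist u v

/-- Add each pair in `S` as a directed edge of weight `G.dist`. -/
noncomputable def addD (S : Set (V × V)) : WGraph V :=
  ⟨fun a b => G.w a b ⊓ sInf {c | (a, b) ∈ S ∧ c = G.dist a b}⟩

/-- Add each pair in `S` as an undirected edge of weight `G.dist`. -/
noncomputable def addU (S : Set (V × V)) : WGraph V :=
  ⟨fun a b => G.w a b ⊓ sInf {c | ((a, b) ∈ S ∨ (b, a) ∈ S) ∧ c = G.dist a b}⟩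

/-- `S` is a (directed) `(k,ρ)`-shortcut set for `G`. -/
def IsShortcutSetD (k ρ : ℕ) (S : Set (V × V)) : Prop :=
  (∀ p ∈ S, G.IsShortcut p.1 p.2) ∧ (G.addD S).IsKRhoGraph k ρ ∧
    ∀ x y, (G.addD S).dist x y = G.dist x y

/-- `S` is an (undirected) `(k,ρ)`-shortcut set for `G`. -/
def IsShortcutSetU (k ρ : ℕ) (S : Set (V × V)) : Prop :=
  (∀ p ∈ S, G.IsShortcut p.1 p.2) ∧ (G.addU S).IsKRhoGraph k ρ ∧
    ∀ x y, (G.addU S).dist x y = G.dist x y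

end WGraph

namespace WGraph

variable {V : Type*} (G : WGraph V)

/-- The union of all `ρ`-closest neighbor sets of `v`. -/
def closestUnion (ρ : ℕ) (v : V) : Set V :=
  {u | ∃ S : Set V, G.IsClosest ρ v S ∧ u ∈ S}

/-- `Sφ` is the set of the `min(|R_v|,ρ)` smallest elements of the union of all
`ρ`-closest neighbor sets of `v`, under the lexicographic order on `(dist(v,·), φ(·))`. -/
def IsPhiSet (φ : V → ℕ) (ρ : ℕ) (v : V) (Sφ : Set V) : Prop :=
  Sφ ⊆ G.closestUnion ρ v ∧ Sφ.ncard = min (G.Reach v).ncard ρ ∧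
    ∀ a ∈ Sφ, ∀ b ∈ G.closestUnion ρ v \ Sφ,
      G.dist v a < G.dist v b ∨ (G.dist v a = G.dist v b ∧ φ a < φ b)

end WGraph

/-- A shortest-path-with-fewest-hops tree rooted at `v` spanning `S`:
for each `s ∈ S` a walk from `v` to `s` of minimum weight and, among those, fewest
hops, such that the walks cohere into a tree (each vertex has a unique path from the
root, expressed by equality of the prefixes up to the first occurrence). -/
structure FHTree {V : Type*} [DecidableEq V] (G : WGraph V) (v : V) (S : Set V) where
  walk : (s : V) → s ∈ S → List V
  ends : ∀ s hs, WalkEnds v (walk s hs) s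
  minWeight : ∀ s hs, G.walkWeight v (walk s hs) = G.dist v s
  fewHops : ∀ s hs, ((walk s hs).length : ℕ∞) = G.hopdist v s
  coherent : ∀ s hs t ht (x : V), x ∈ walk s hs → x ∈ walk t ht →
    (walk s hs).take ((walk s hs).idxOf x + 1) =
      (walk t ht).take ((walk t ht).idxOf x + 1)

namespace FHTree

variable {V : Type*} [DecidableEq V] {G : WGraph V} {v : V} {S : Set V}

/-- The tree is a path: the walks are totally ordered by the prefix relation. -/
def IsPath (T : FHTree G v S) : Prop :=
  ∀ s hs t ht, T.walk s hs <+: T.walk t ht ∨ T.walk t ht <+: T.walk s hs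

/-- The vertex set of the tree. -/
def verts (T : FHTree G v S) : Set V :=
  insert v {x | ∃ s hs, x ∈ T.walk s hs}

/-- The edge set of the tree, as unordered pairs. -/
def edges (T : FHTree G v S) : Set (Sym2 V) :=
  {e | ∃ s hs, ∃ l₁ l₂ : List V, ∃ a b : V,
    v :: T.walk s hs = l₁ ++ a :: b :: l₂ ∧ e = s(a, b)}

end FHTree
namespace WGraph

variable {V : Type*} (G : WGraph V)

theorem aux_getLastD_append (d : V) (p q : List V) :
    (p ++ q).getLastD d = q.getLastD (p.getLastD d) := by
  induction p generalizing d with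
  | nil => simp
  | cons a p ih => simp only [List.cons_append, List.getLastD_cons, ih]

theorem aux_walkWeight_append (u : V) (p q : List V) :
    G.walkWeight u (p ++ q) = G.walkWeight u p + G.walkWeight (p.getLastD u) q := by
  induction p generalizing u with
  | nil => simp [walkWeight]
  | cons a p ih =>
    simp only [List.cons_append, walkWeight, List.getLastD_cons, List.append_eq]
    rw [ih]
    ring

theorem aux_dist_le (u v : V) (p : List V) (h : WalkEnds u p v) :
    G.dist u v ≤ G.walkWeight u p := sInf_le ⟨p, h, rfl⟩

theorem aux_dist_self (u : V) : G.dist u u = 0 :=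
  le_antisymm (sInf_le ⟨[], rfl, rfl⟩) (zero_le)

theorem aux_exists_minWalk [Finite V] (hpos : G.Positive) (u v : V) (h : G.dist u v ≠ ⊤) :
    ∃ p : List V, WalkEnds u p v ∧ G.walkWeight u p = G.dist u v := by
  cases nonempty_fintype V
  set ε : ℝ≥0∞ := (Finset.univ : Finset (V × V)).inf' (Finset.univ_nonempty_iff.mpr ⟨(u, u)⟩)
      (fun p => G.w p.1 p.2) with hε
  have hεpos : 0 < ε := by
    rw [hε, Finset.lt_inf'_iff]; exact fun b _ => hpos b.1 b.2
  have hεle : ∀ a b : V, ε ≤ G.w a b := fun a b => Finset.inf'_le _ (Finset.mem_univ (a, b))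
  have hlen : ∀ (x : V) (p : List V), (p.length : ℝ≥0∞) * ε ≤ G.walkWeight x p := by
    intro x p
    induction p generalizing x with
    | nil => simp [walkWeight]
    | cons a p ih =>
      simp only [walkWeight, List.length_cons]
      calc ((p.length + 1 : ℕ) : ℝ≥0∞) * ε = ε + (p.length : ℝ≥0∞) * ε := by
            push_cast; ring
        _ ≤ G.w x a + G.walkWeight a p := add_le_add (hεle x a) (ih a)
  obtain ⟨N, hN⟩ : ∃ N : ℕ, G.dist u v < (N : ℝ≥0∞) * ε := by
    rcases eq_or_ne ε ⊤ with hT | hT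
    · refine ⟨1, ?_⟩
      rw [hT]; simp only [Nat.cast_one, one_mul]
      exact lt_top_iff_ne_top.2 h
    · obtain ⟨N, hN⟩ := ENNReal.exists_nat_gt
        (show G.dist u v / ε ≠ ⊤ from (ENNReal.div_lt_top h hεpos.ne').ne)
      exact ⟨N, by rwa [ENNReal.div_lt_iff (Or.inl hεpos.ne') (Or.inl hT)] at hN⟩
  set W : Set ℝ≥0∞ := {c | ∃ p, WalkEnds u p v ∧ G.walkWeight u p = c} with hWdef
  have hdW : G.dist u v = sInf W := rfl
  set A := W ∩ Set.Iio ((N : ℝ≥0∞) * ε) with hAdef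
  have hAfin : A.Finite := by
    have hsub : A ⊆ (fun p => G.walkWeight u p) '' {p : List V | p.length < N} := by
      rintro c ⟨⟨p, hp, rfl⟩, hc⟩
      refine ⟨p, ?_, rfl⟩
      by_contra hlenN
      simp only [Set.mem_setOf_eq, not_lt] at hlenN
      have : (N : ℝ≥0∞) * ε ≤ G.walkWeight u p :=
        le_trans (mul_le_mul' (by exact_mod_cast hlenN) le_rfl) (hlen u p)
      exact absurd hc (not_lt.2 this)
    exact Set.Finite.subset (Set.Finite.image _ (List.finite_length_lt V N)) hsub
  have hAne : A.Nonempty := by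
    have h2 : sInf W < (N : ℝ≥0∞) * ε := hdW ▸ hN
    obtain ⟨c, hcW, hclt⟩ := sInf_lt_iff.mp h2
    exact ⟨c, hcW, hclt⟩
  have hAinf : sInf A = G.dist u v := by
    refine le_antisymm ?_ (hdW ▸ sInf_le_sInf Set.inter_subset_left)
    by_contra hlt
    push_neg at hlt
    have h2 : sInf W < min (sInf A) ((N : ℝ≥0∞) * ε) := lt_min (hdW ▸ hlt) (hdW ▸ hN)
    obtain ⟨c, hcW, hclt⟩ := sInf_lt_iff.mp h2
    have hcA : c ∈ A := ⟨hcW, lt_of_lt_of_le hclt (min_le_right _ _)⟩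
    exact absurd (sInf_le hcA) (not_le.2 (lt_of_lt_of_le hclt (min_le_left _ _)))
  have hmem := hAne.csInf_mem hAfin
  rw [hAinf] at hmem
  obtain ⟨⟨p, hp, hw⟩, -⟩ := hmem
  exact ⟨p, hp, hw⟩

theorem aux_hopdist_le (u v : V) (h : G.dist u v ≠ ⊤) (p : List V)
    (hp : WalkEnds u p v) (hw : G.walkWeight u p = G.dist u v) :
    G.hopdist u v ≤ (p.length : ℕ∞) := by
  rw [hopdist, if_neg h]; exact sInf_le ⟨p, hp, hw, rfl⟩

theorem aux_exists_minHopWalk [Finite V] (hpos : G.Positive) (u v : V) (h : G.dist u v ≠ ⊤) :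
    ∃ p : List V, WalkEnds u p v ∧ G.walkWeight u p = G.dist u v ∧
      (p.length : ℕ∞) = G.hopdist u v := by
  obtain ⟨p0, hp0, hw0⟩ := aux_exists_minWalk G hpos u v h
  set L : Set ℕ := {n | ∃ p : List V, WalkEnds u p v ∧ G.walkWeight u p = G.dist u v ∧
    p.length = n} with hLdef
  have hLne : L.Nonempty := ⟨p0.length, p0, hp0, hw0, rfl⟩
  obtain ⟨p, hp, hw, hl⟩ := Nat.sInf_mem hLne
  refine ⟨p, hp, hw, ?_⟩
  rw [hopdist, if_neg h]
  refine le_antisymm ?_ (sInf_le ⟨p, hp, hw, rfl⟩)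
  refine le_sInf ?_
  rintro n ⟨q, hq, hwq, rfl⟩
  have hle2 : sInf L ≤ q.length := Nat.sInf_le ⟨q, hq, hwq, rfl⟩
  rw [hl]
  exact_mod_cast hle2

theorem aux_prefix_opt [Finite V] (hpos : G.Positive) (u : V) (r s : List V)
    (hw : G.walkWeight u (r ++ s) = G.dist u ((r ++ s).getLastD u))
    (hfin : G.walkWeight u (r ++ s) ≠ ⊤) :
    G.walkWeight u r = G.dist u (r.getLastD u) := by
  set m := r.getLastD u with hm
  have hsplit : G.walkWeight u (r ++ s) = G.walkWeight u r + G.walkWeight m s :=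
    G.aux_walkWeight_append u r s
  have hr_ne : G.walkWeight u r ≠ ⊤ := by
    intro hT; rw [hsplit, hT, top_add] at hfin; exact hfin rfl
  have hs_ne : G.walkWeight m s ≠ ⊤ := by
    intro hT; rw [hsplit, hT, add_top] at hfin; exact hfin rfl
  have hle : G.dist u m ≤ G.walkWeight u r := G.aux_dist_le u m r rfl
  rcases hle.lt_or_eq with hlt | heq
  · exfalso
    obtain ⟨r', hr', hw'⟩ := G.aux_exists_minWalk hpos u m (ne_top_of_le_ne_top hr_ne hle)
    have hends : WalkEnds u (r' ++ s) ((r ++ s).getLastD u) := by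
      show (r' ++ s).getLastD u = (r ++ s).getLastD u
      rw [aux_getLastD_append, aux_getLastD_append, hr']
    have hwlt : G.walkWeight u (r' ++ s) < G.walkWeight u (r ++ s) := by
      rw [hsplit, G.aux_walkWeight_append u r' s, hr', hw']
      exact ENNReal.add_lt_add_right hs_ne hlt
    exact absurd (G.aux_dist_le _ _ _ hends) (not_le.2 (hw ▸ hwlt))
  · exact heq.symm

theorem aux_chain_concat {r : V → V → Prop} (x a : V) (l : List V) :
    List.Chain r x (l ++ [a]) ↔ List.Chain r x l ∧ r (l.getLastD x) a := by
  induction l generalizing x with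
  | nil => simp [List.Chain]
  | cons b l ih =>
    rw [List.cons_append]; simp only [List.Chain] at ih ⊢
    rw [List.isChain_cons_cons, List.isChain_cons_cons, ih, List.getLastD_cons, and_assoc]

theorem aux_chain [Finite V] (hpos : G.Positive) (u : V) (p : List V)
    (hw : G.walkWeight u p = G.dist u (p.getLastD u))
    (hfin : G.walkWeight u p ≠ ⊤) :
    List.Chain (fun a b => G.dist u a < G.dist u b) u p := by
  induction p using List.reverseRecOn with
  | nil => exact List.Chain.nil
  | append_singleton q a ih =>
    have hq : G.walkWeight u q = G.dist u (q.getLastD u) :=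
      G.aux_prefix_opt hpos u q [a] hw hfin
    have hsplit := G.aux_walkWeight_append u q [a]
    have hq_ne : G.walkWeight u q ≠ ⊤ := by
      intro hT; rw [hsplit, hT, top_add] at hfin; exact hfin rfl
    have hlast : (q ++ [a]).getLastD u = a := by rw [aux_getLastD_append]; rfl
    have hlt : G.dist u (q.getLastD u) < G.dist u a := by
      calc G.dist u (q.getLastD u) = G.walkWeight u q := hq.symm
        _ < G.walkWeight u q + G.w (q.getLastD u) a := by
            exact ENNReal.lt_add_right hq_ne (hpos _ a).ne'
        _ = G.walkWeight u (q ++ [a]) := by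
            rw [hsplit]; simp [walkWeight]
        _ = G.dist u a := by rw [hw, hlast]
    exact (aux_chain_concat u a q).mpr ⟨ih hq hq_ne, hlt⟩

end WGraph
namespace WGraph

variable {V : Type*} (G : WGraph V)

theorem aux_exists_isClosest [Finite V] (ρ : ℕ) (u : V) :
    ∃ S : Set V, G.IsClosest ρ u S := by
  classical
  cases nonempty_fintype V
  set R : Finset V := (G.Reach u).toFinset with hR
  set m := min R.card ρ with hm
  have hmR : m ≤ R.card := min_le_left _ _
  have hne : (R.powersetCard m).Nonempty := Finset.powersetCard_nonempty.2 hmR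
  obtain ⟨S₀, hS₀mem, hS₀min⟩ :=
    Finset.exists_min_image (R.powersetCard m) (fun S => ∑ x ∈ S, G.dist u x) hne
  rw [Finset.mem_powersetCard] at hS₀mem
  obtain ⟨hS₀sub, hS₀card⟩ := hS₀mem
  have hsubR : (S₀ : Set V) ⊆ G.Reach u := by
    intro x hx
    have := hS₀sub hx
    rwa [hR, Set.mem_toFinset] at this
  refine ⟨(S₀ : Set V), hsubR, ?_, ?_⟩
  · rw [Set.ncard_coe_finset, hS₀card, hm, hR, ← Set.ncard_eq_toFinset_card']
  · rintro a ha b ⟨hbR, hbS⟩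
    by_contra hcon
    push_neg at hcon
    have haS : a ∈ S₀ := ha
    have hbS' : b ∉ S₀ := fun h => hbS h
    set S' : Finset V := insert b (S₀.erase a) with hS'
    have hS'sub : S' ⊆ R := by
      intro x hx
      rw [hS', Finset.mem_insert] at hx
      rcases hx with rfl | hx
      · rw [hR, Set.mem_toFinset]; exact hbR
      · exact hS₀sub (Finset.erase_subset _ _ hx)
    have hS'card : S'.card = m := by
      rw [hS', Finset.card_insert_of_notMem (fun h => hbS' (Finset.erase_subset _ _ h)),
        Finset.card_erase_of_mem haS, hS₀card]
      have : 1 ≤ m := by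
        rw [← hS₀card]; exact Finset.card_pos.2 ⟨a, haS⟩
      omega
    have hsum_ne : ∑ x ∈ S₀.erase a, G.dist u x ≠ ⊤ := by
      rw [ENNReal.sum_ne_top]
      intro x hx
      have : x ∈ G.Reach u := by
        have := hS₀sub (Finset.erase_subset _ _ hx)
        rwa [hR, Set.mem_toFinset] at this
      exact this.2
    have hlt : ∑ x ∈ S', G.dist u x < ∑ x ∈ S₀, G.dist u x := by
      rw [hS', Finset.sum_insert (fun h => hbS' (Finset.erase_subset _ _ h)),
        ← Finset.add_sum_erase _ _ haS]
      exact ENNReal.add_lt_add_right hsum_ne hcon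
    exact absurd (hS₀min S' (Finset.mem_powersetCard.2 ⟨hS'sub, hS'card⟩)) (not_le.2 hlt)

end WGraph
namespace WGraph

variable {V : Type*} (G : WGraph V)

theorem aux_getLastD_eq {α : Type*} (d : α) (l : List α) (h : l ≠ []) :
    l.getLastD d = l[l.length - 1]'(by cases l with | nil => exact absurd rfl h | cons a t => simp) := by
  rw [List.getLastD_eq_getLast?, List.getLast?_eq_getElem?]
  simp [List.getElem?_eq_getElem
    (show l.length - 1 < l.length by cases l with | nil => exact absurd rfl h | cons a t => simp)]

theorem aux_walkWeight_pos (hpos : G.Positive) (x : V) (p : List V) (h : p ≠ []) :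
    0 < G.walkWeight x p := by
  cases p with
  | nil => exact absurd rfl h
  | cons a t =>
    simp only [walkWeight]
    exact lt_of_lt_of_le (hpos x a) le_self_add

end WGraph

/-- if a vertex `u` of an undirected graph with strictly positive weights
has at least `k+1` reachable vertices but no `(k,k+1)`-ball, then `u` reaches (exactly)
`k` of its closest neighbors within `k` hops — i.e. some `k`-closest neighbor set lies
within `k` hops (while by hypothesis no `(k+1)`-closest one does) — and every
shortest-path-with-fewest-hops tree connecting `u` to its `k` closest neighbors is a
path. -/
theorem stmt2 {V : Type*} [Finite V] [DecidableEq V] (G : WGraph V)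
    (hsym : G.Symm) (hpos : G.Positive) (k : ℕ) (hk : 1 ≤ k) (u : V)
    (hR : k + 1 ≤ (G.Reach u).ncard) (hball : ¬ G.HasBall k (k + 1) u) :
    (∃ S : Set V, G.IsClosest k u S ∧ ∀ v ∈ S, G.hopdist u v ≤ (k : ℕ∞)) ∧
      ∀ T : FHTree G u (G.closestUnion k u), T.IsPath := by
  classical
  obtain ⟨S₀, hS₀⟩ := G.aux_exists_isClosest (k + 1) u
  have hS₀card : S₀.ncard = k + 1 := by
    rw [hS₀.2.1]; exact min_eq_right hR
  unfold WGraph.HasBall at hball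
  push_neg at hball
  obtain ⟨v, hvS₀, hvhop⟩ := hball S₀ hS₀
  have hvR : v ∈ G.Reach u := hS₀.1 hvS₀
  have hvd : G.dist u v ≠ ⊤ := hvR.2
  obtain ⟨q, hq_ends, hq_w, hq_len⟩ := G.aux_exists_minHopWalk hpos u v hvd
  have hkn : k < q.length := by
    have h1 : (k : ℕ∞) < G.hopdist u v := hvhop
    rw [← hq_len] at h1
    exact_mod_cast h1
  have hq_ne : q ≠ [] := by
    intro h
    have := hkn; rw [h] at this; simp at this
  have hwq_ne : G.walkWeight u q ≠ ⊤ := by rw [hq_w]; exact hvd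
  have hw' : G.walkWeight u q = G.dist u (q.getLastD u) := by
    rw [show q.getLastD u = v from hq_ends]; exact hq_w
  have hchain := G.aux_chain hpos u q hw' hwq_ne
  haveI : IsTrans V (fun a b => G.dist u a < G.dist u b) := ⟨fun _ _ _ h1 h2 => lt_trans h1 h2⟩
  have hpw : List.Pairwise (fun a b => G.dist u a < G.dist u b) (u :: q) :=
    by haveI : Trans (fun a b : V => G.dist u a < G.dist u b) (fun a b : V => G.dist u a < G.dist u b) (fun a b : V => G.dist u a < G.dist u b) := ⟨fun h1 h2 => lt_trans h1 h2⟩; exact List.isChain_iff_pairwise.mp hchain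
  have hpwq : List.Pairwise (fun a b => G.dist u a < G.dist u b) q := hpw.of_cons
  have hqu : ∀ a ∈ q, G.dist u u < G.dist u a := (List.pairwise_cons.mp hpw).1
  have hmono : ∀ i j (hi : i < q.length) (hj : j < q.length), i < j →
      G.dist u q[i] < G.dist u q[j] := fun i j hi hj hij =>
    List.pairwise_iff_getElem.mp hpwq i j hi hj hij
  have hmono' : ∀ i j (hi : i < q.length) (hj : j < q.length), i ≤ j →
      G.dist u q[i] ≤ G.dist u q[j] := by
    intro i j hi hj hij
    rcases eq_or_lt_of_le hij with rfl | h
    · exact le_rfl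
    · exact le_of_lt (hmono i j hi hj h)
  have hqlast : q[q.length - 1]'(by omega) = v := by
    have h1 := WGraph.aux_getLastD_eq u q hq_ne
    rw [show q.getLastD u = v from hq_ends] at h1
    exact h1.symm
  have hreach : ∀ i (hi : i < q.length), q[i] ∈ G.Reach u := by
    intro i hi
    have hle : G.dist u q[i] ≤ G.dist u v := by
      rw [← hqlast]; exact hmono' i (q.length - 1) hi (by omega) (by omega)
    constructor
    · intro he
      have h2 := hqu q[i] (List.getElem_mem _)
      rw [he] at h2; exact lt_irrefl _ h2
    · intro hT
      exact hvd (top_le_iff.1 (hT ▸ hle))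
  have hdqi_ne : ∀ i (hi : i < q.length), G.dist u q[i] ≠ ⊤ := fun i hi => (hreach i hi).2
  have hpref : ∀ i, G.walkWeight u (q.take i) = G.dist u ((q.take i).getLastD u) := by
    intro i
    apply G.aux_prefix_opt hpos u (q.take i) (q.drop i)
    · rw [List.take_append_drop]; exact hw'
    · rw [List.take_append_drop]; exact hwq_ne
  have htake_succ : ∀ i (hi : i < q.length), q.take (i + 1) = q.take i ++ [q[i]] := by
    intro i hi
    rw [List.take_succ, List.getElem?_eq_getElem hi]; rfl
  have htake_last : ∀ i (hi : i < q.length), (q.take (i + 1)).getLastD u = q[i] := by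
    intro i hi
    rw [htake_succ i hi, WGraph.aux_getLastD_append]; rfl
  have hwt : ∀ i (hi : i < q.length), G.walkWeight u (q.take (i + 1)) = G.dist u q[i] := by
    intro i hi
    rw [hpref (i + 1), htake_last i hi]
  have hople : ∀ i (hi : i < q.length), G.hopdist u q[i] ≤ ((i + 1 : ℕ) : ℕ∞) := by
    intro i hi
    have h1 := G.aux_hopdist_le u q[i] (hdqi_ne i hi) (q.take (i + 1)) (htake_last i hi) (hwt i hi)
    rwa [List.length_take, min_eq_left (by omega)] at h1
  have hdrop_ends : ∀ i (hi : i < q.length), (q.drop (i + 1)).getLastD q[i] = v := by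
    intro i hi
    have h2 : q.getLastD u = v := hq_ends
    rw [← List.take_append_drop (i + 1) q, WGraph.aux_getLastD_append, htake_last i hi] at h2
    exact h2
  have hdrop_w : ∀ i (hi : i < q.length),
      G.dist u q[i] + G.walkWeight q[i] (q.drop (i + 1)) = G.dist u v := by
    intro i hi
    have h2 : G.walkWeight u q = G.dist u v := hq_w
    rw [← List.take_append_drop (i + 1) q, G.aux_walkWeight_append, htake_last i hi,
      hwt i hi] at h2
    exact h2
  have hopv : G.hopdist u v = (q.length : ℕ∞) := hq_len.symm
  have hopeq : ∀ i (hi : i < q.length), G.hopdist u q[i] = ((i + 1 : ℕ) : ℕ∞) := by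
    intro i hi
    refine le_antisymm (hople i hi) ?_
    by_contra hcon
    push_neg at hcon
    obtain ⟨p', hp'e, hp'w, hp'l⟩ := G.aux_exists_minHopWalk hpos u q[i] (hdqi_ne i hi)
    have hp'len : p'.length < i + 1 := by
      have h2 : (p'.length : ℕ∞) < ((i + 1 : ℕ) : ℕ∞) := by rw [hp'l]; exact hcon
      exact_mod_cast h2
    have hends2 : WalkEnds u (p' ++ q.drop (i + 1)) v := by
      show (p' ++ q.drop (i + 1)).getLastD u = v
      rw [WGraph.aux_getLastD_append, show p'.getLastD u = q[i] from hp'e]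
      exact hdrop_ends i hi
    have hw2 : G.walkWeight u (p' ++ q.drop (i + 1)) = G.dist u v := by
      rw [G.aux_walkWeight_append, show p'.getLastD u = q[i] from hp'e, hp'w]
      exact hdrop_w i hi
    have hlen2 := G.aux_hopdist_le u v hvd _ hends2 hw2
    rw [hopv] at hlen2
    have hnat : q.length ≤ (p' ++ q.drop (i + 1)).length := by exact_mod_cast hlen2
    rw [List.length_append, List.length_drop] at hnat
    omega
  -- the set E of the k closest vertices
  set E : Set V := {y | y ∈ q.take k} with hE
  have hmemE : ∀ y, y ∈ E ↔ ∃ j, ∃ hj : j < q.length, j < k ∧ q[j] = y := by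
    intro y
    constructor
    · intro hy
      have hy' : y ∈ q.take k := hy
      rw [List.mem_take_iff_getElem] at hy'
      obtain ⟨j, hj, rfl⟩ := hy'
      exact ⟨j, by omega, by omega, rfl⟩
    · rintro ⟨j, hj, hjk, rfl⟩
      show q[j] ∈ q.take k
      rw [List.mem_take_iff_getElem]
      exact ⟨j, by omega, rfl⟩
  have hnodup : q.Nodup := hpwq.imp (fun h => fun e => absurd h (by rw [e]; exact lt_irrefl _))
  have hEcard : E.ncard = k := by
    rw [hE, ← List.coe_toFinset, Set.ncard_coe_finset,
      List.toFinset_card_of_nodup (hnodup.sublist (List.take_sublist _ _)), List.length_take]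
    omega
  have hRlt_S₀ : {y | y ∈ G.Reach u ∧ G.dist u y < G.dist u v} ⊆ S₀ \ {v} := by
    rintro y ⟨hyR, hylt⟩
    constructor
    · by_contra hyS
      exact absurd (hS₀.2.2 v hvS₀ y ⟨hyR, hyS⟩) (not_le.2 hylt)
    · intro he
      simp only [Set.mem_singleton_iff] at he
      rw [he] at hylt; exact lt_irrefl _ hylt
  have hcard_lt : {y | y ∈ G.Reach u ∧ G.dist u y < G.dist u v}.ncard ≤ k := by
    have h1 := Set.ncard_le_ncard hRlt_S₀ (Set.toFinite _)
    rw [Set.ncard_diff_singleton_of_mem hvS₀, hS₀card] at h1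
    omega
  have hlen_eq : q.length = k + 1 := by
    have hsub2 : {y | y ∈ q.take (q.length - 1)} ⊆
        {y | y ∈ G.Reach u ∧ G.dist u y < G.dist u v} := by
      intro y hy
      rw [Set.mem_setOf_eq, List.mem_take_iff_getElem] at hy
      obtain ⟨j, hj, rfl⟩ := hy
      refine ⟨hreach j (by omega), ?_⟩
      rw [← hqlast]
      exact hmono j (q.length - 1) (by omega) (by omega) (by omega)
    have hc1 : {y | y ∈ q.take (q.length - 1)}.ncard = q.length - 1 := by
      rw [← List.coe_toFinset, Set.ncard_coe_finset,
        List.toFinset_card_of_nodup (hnodup.sublist (List.take_sublist _ _)), List.length_take]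
      omega
    have hc2 := Set.ncard_le_ncard hsub2 (Set.toFinite _)
    rw [hc1] at hc2
    omega
  have hE_eq : E = {y | y ∈ G.Reach u ∧ G.dist u y < G.dist u v} := by
    refine Set.eq_of_subset_of_ncard_le ?_ (by rw [hEcard]; exact hcard_lt) (Set.toFinite _)
    intro y hy
    obtain ⟨j, hj, hjk, rfl⟩ := (hmemE y).1 hy
    refine ⟨hreach j hj, ?_⟩
    rw [← hqlast]
    exact hmono j (q.length - 1) hj (by omega) (by omega)
  have hEi : ∀ i (hi : i < q.length),
      {y | y ∈ q.take i} = {y | y ∈ G.Reach u ∧ G.dist u y < G.dist u q[i]} := by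
    intro i hi
    ext y
    simp only [Set.mem_setOf_eq]
    constructor
    · intro hy
      rw [List.mem_take_iff_getElem] at hy
      obtain ⟨j, hj, rfl⟩ := hy
      exact ⟨hreach j (by omega), hmono j i (by omega) hi (by omega)⟩
    · rintro ⟨hyR, hylt⟩
      have hyE : y ∈ E := by
        rw [hE_eq]
        refine ⟨hyR, lt_of_lt_of_le hylt ?_⟩
        rw [← hqlast]
        exact hmono' i (q.length - 1) hi (by omega) (by omega)
      obtain ⟨j, hj, hjk, rfl⟩ := (hmemE y).1 hyE
      have hji : j < i := by
        by_contra hcon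
        push_neg at hcon
        rcases eq_or_lt_of_le hcon with rfl | h
        · exact lt_irrefl _ hylt
        · exact absurd (hmono i j hi hj h) (not_lt.2 hylt.le)
      rw [List.mem_take_iff_getElem]
      exact ⟨j, by omega, rfl⟩
  have huniq : ∀ i (hi : i < q.length), ∀ p : List V, WalkEnds u p q[i] →
      G.walkWeight u p = G.dist u q[i] → p.length = i + 1 → p = q.take (i + 1) := by
    intro i
    induction i with
    | zero =>
      intro hi p hpe hpw hpl
      obtain ⟨a, p', rfl⟩ : ∃ a p', p = a :: p' := by
        cases p with
        | nil => simp at hpl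
        | cons a p' => exact ⟨a, p', rfl⟩
      have hp' : p' = [] := by
        rw [List.length_cons] at hpl
        exact List.length_eq_zero_iff.1 (by omega)
      subst hp'
      have ha : a = q[0] := by simpa [WalkEnds] using hpe
      rw [htake_succ 0 hi, ha]
      rfl
    | succ i ih =>
      intro hi p hpe hpw hpl
      have hpne : p ≠ [] := by intro h; rw [h] at hpl; simp at hpl
      have hlast : p.getLast hpne = q[i + 1] := by
        have h1 : p.getLastD u = q[i + 1] := hpe
        rw [← List.dropLast_append_getLast hpne, WGraph.aux_getLastD_append] at h1
        exact h1
      set p₀ := p.dropLast with hp₀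
      have hsplitp : p = p₀ ++ [q[i + 1]] := by
        rw [hp₀, ← hlast, List.dropLast_append_getLast hpne]
      have hp₀len : p₀.length = i + 1 := by
        rw [hp₀, List.length_dropLast, hpl]
        omega
      set m := p₀.getLastD u with hm
      have hp₀w : G.walkWeight u p₀ = G.dist u m := by
        apply G.aux_prefix_opt hpos u p₀ [q[i + 1]]
        · rw [← hsplitp, show p.getLastD u = q[i + 1] from hpe]; exact hpw
        · rw [← hsplitp, hpw]; exact hdqi_ne (i + 1) hi
      have hwsum : G.walkWeight u p = G.walkWeight u p₀ + G.w m q[i + 1] := by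
        rw [hsplitp, G.aux_walkWeight_append]
        simp only [WGraph.walkWeight, add_zero]
        rfl
      have hwp₀_ne : G.walkWeight u p₀ ≠ ⊤ := by
        intro hT
        have h2 : G.walkWeight u p ≠ ⊤ := by rw [hpw]; exact hdqi_ne (i + 1) hi
        rw [hwsum, hT, top_add] at h2
        exact h2 rfl
      have hmlt : G.dist u m < G.dist u q[i + 1] := by
        calc G.dist u m = G.walkWeight u p₀ := hp₀w.symm
          _ < G.walkWeight u p₀ + G.w m q[i + 1] :=
              ENNReal.lt_add_right hwp₀_ne (hpos m _).ne'
          _ = G.walkWeight u p := hwsum.symm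
          _ = G.dist u q[i + 1] := hpw
      have hp₀ne : p₀ ≠ [] := by intro h; rw [h] at hp₀len; simp at hp₀len
      have hmne_u : m ≠ u := by
        intro he
        have hwpos := G.aux_walkWeight_pos hpos u p₀ hp₀ne
        rw [hp₀w, he, G.aux_dist_self u] at hwpos
        exact lt_irrefl _ hwpos
      have hmR : m ∈ G.Reach u :=
        ⟨hmne_u, fun hT => (hdqi_ne (i + 1) hi) (top_le_iff.1 (hT ▸ hmlt.le))⟩
      have hmE : m ∈ q.take (i + 1) := by
        have h3 : m ∈ {y | y ∈ G.Reach u ∧ G.dist u y < G.dist u q[i + 1]} := ⟨hmR, hmlt⟩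
        rw [← hEi (i + 1) hi] at h3
        exact h3
      rw [List.mem_take_iff_getElem] at hmE
      obtain ⟨j, hj, hjm⟩ := hmE
      have hjeq : j = i := by
        by_contra hne2
        have hji' : j < i := by omega
        have hopm : G.hopdist u m = ((j + 1 : ℕ) : ℕ∞) := by
          rw [← hjm]; exact hopeq j (by omega)
        obtain ⟨r', hr'e, hr'w, hr'l⟩ := G.aux_exists_minHopWalk hpos u m hmR.2
        have hr'len : r'.length = j + 1 := by
          have h4 := hr'l.trans hopm
          exact_mod_cast h4
        have hends3 : WalkEnds u (r' ++ [q[i + 1]]) q[i + 1] := by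
          show (r' ++ [q[i + 1]]).getLastD u = q[i + 1]
          rw [WGraph.aux_getLastD_append]
          rfl
        have hw3 : G.walkWeight u (r' ++ [q[i + 1]]) = G.dist u q[i + 1] := by
          rw [G.aux_walkWeight_append, show r'.getLastD u = m from hr'e, hr'w, ← hpw, hwsum, hp₀w]
          simp only [WGraph.walkWeight, add_zero]
        have hle3 := G.aux_hopdist_le u q[i + 1] (hdqi_ne (i + 1) hi) _ hends3 hw3
        rw [hopeq (i + 1) hi, List.length_append, hr'len] at hle3
        have h5 : (i + 2 : ℕ) ≤ j + 1 + 1 := by exact_mod_cast hle3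
        omega
      subst hjeq
      have hm_eq : m = q[j] := hjm.symm
      have hp₀e : WalkEnds u p₀ q[j] := by
        show p₀.getLastD u = q[j]
        rw [← hm]; exact hm_eq
      have h6 := ih (by omega) p₀ hp₀e (by rw [hp₀w, hm_eq]) hp₀len
      rw [hsplitp, h6, ← htake_succ (j + 1) hi]
  have hSk_closest : G.IsClosest k u E := by
    refine ⟨?_, ?_, ?_⟩
    · rw [hE_eq]; exact fun y hy => hy.1
    · rw [hEcard]; exact (min_eq_right (by omega : k ≤ (G.Reach u).ncard)).symm
    · intro a ha b hb
      rw [hE_eq] at ha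
      have hbv : G.dist u v ≤ G.dist u b := by
        by_contra hcon
        push_neg at hcon
        exact hb.2 (by rw [hE_eq]; exact ⟨hb.1, hcon⟩)
      exact le_trans ha.2.le hbv
  have hhopE : ∀ y ∈ E, G.hopdist u y ≤ (k : ℕ∞) := by
    intro y hy
    obtain ⟨j, hj, hjk, rfl⟩ := (hmemE y).1 hy
    rw [hopeq j hj]
    exact_mod_cast (by omega : j + 1 ≤ k)
  have hCU : G.closestUnion k u = E := by
    apply Set.Subset.antisymm
    · rintro y ⟨S, hS, hyS⟩
      have hScard : S.ncard = k := by
        rw [hS.2.1]; exact min_eq_right (by omega)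
      have hylt : G.dist u y < G.dist u v := by
        by_contra hcon
        push_neg at hcon
        have hES : E ⊆ S := by
          intro z hz
          by_contra hzS
          have hzRlt := hE_eq ▸ hz
          have h1 := hS.2.2 y hyS z ⟨hzRlt.1, hzS⟩
          exact absurd h1 (not_le.2 (lt_of_lt_of_le hzRlt.2 hcon))
        have hyE : y ∉ E := by
          intro hyE
          have := (hE_eq ▸ hyE).2
          exact absurd hcon (not_le.2 this)
        have hins : insert y E ⊆ S := Set.insert_subset hyS hES
        have hcard := Set.ncard_le_ncard hins (Set.toFinite _)
        rw [Set.ncard_insert_of_notMem hyE (Set.toFinite _), hEcard, hScard] at hcard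
        omega
      rw [hE_eq]
      exact ⟨hS.1 hyS, hylt⟩
    · intro y hy
      exact ⟨E, hSk_closest, hy⟩
  refine ⟨⟨E, hSk_closest, hhopE⟩, ?_⟩
  intro T s hs t ht
  have key : ∀ s (hs : s ∈ G.closestUnion k u),
      ∃ i, i < k ∧ ∃ hi : i < q.length, T.walk s hs = q.take (i + 1) ∧ s = q[i] := by
    intro s hs
    have hsE : s ∈ E := hCU ▸ hs
    obtain ⟨j, hj, hjk, hjs⟩ := (hmemE s).1 hsE
    subst hjs
    refine ⟨j, hjk, hj, ?_, rfl⟩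
    have hlenw : (T.walk _ hs).length = j + 1 := by
      have h1 := T.fewHops _ hs
      rw [hopeq j hj] at h1
      exact_mod_cast h1
    exact huniq j hj _ (T.ends _ hs) (T.minWeight _ hs) hlenw
  obtain ⟨i, hik, hin, hwi, -⟩ := key s hs
  obtain ⟨j, hjk, hjn, hwj, -⟩ := key t ht
  rw [hwi, hwj]
  rcases Nat.le_total i j with h | h
  · left
    have h1 := List.take_prefix (i + 1) (q.take (j + 1))
    rwa [List.take_take, min_eq_left (by omega)] at h1
  · right
    have h1 := List.take_prefix (j + 1) (q.take (i + 1))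
    rwa [List.take_take, min_eq_left (by omega)] at h1
end

section
/- Let G be an undirected graph with strictly positive edge weights, and let u be a vertex with at least k+1 reachable vertices lacking a (k,k+1)-ball. Then the shortest path tree with fewest hops connecting u to the union of all (k+1)-closest neighbor sets has height exactly k+1 (with root u at level 0). -/
open scoped ENNReal Classical

section AuxLemmas

variable {V : Type*}

theorem myGetLastD_append : ∀ (a b : List V) (d : V),
    (a ++ b).getLastD d = b.getLastD (a.getLastD d)
  | [], b, d => rfl
  | x :: a, b, d => by
    rw [List.cons_append, List.getLastD_cons, List.getLastD_cons,
      myGetLastD_append a b x]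

theorem myGetLastD_take {p : List V} {i : ℕ} (hi : i < p.length) (d : V) :
    (p.take (i + 1)).getLastD d = p[i] := by
  have h1 : p.take (i + 1) = p.take i ++ [p[i]] := by
    rw [List.take_succ, List.getElem?_eq_getElem hi]
    rfl
  rw [h1, List.getLastD_concat]

theorem myGetLastD_of_ne_nil {p : List V} (h : p ≠ []) (d : V) :
    p.getLastD d = p.getLast h := by
  rw [List.getLastD_eq_getLast?, List.getLast?_eq_getLast h, Option.getD_some]

/-- Greedy selection of `n` minimizers of `f` inside a finite set `R`. -/
theorem myExists_min_subset {R : Set V} (hfin : R.Finite) (f : V → ℝ≥0∞) :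
    ∀ n, n ≤ R.ncard → ∃ S : Set V, S ⊆ R ∧ S.ncard = n ∧
      ∀ a ∈ S, ∀ b ∈ R \ S, f a ≤ f b
  | 0, _ => ⟨∅, by simp, by simp, by simp⟩
  | n + 1, hn => by
    obtain ⟨S, hSR, hcard, hmin⟩ :=
      myExists_min_subset hfin f n (Nat.le_of_succ_le hn)
    have hSfin : S.Finite := hfin.subset hSR
    have hne : (R \ S).Nonempty := by
      rw [Set.nonempty_iff_ne_empty]
      intro h
      have hsub : R ⊆ S := Set.diff_eq_empty.mp h
      have := Set.ncard_le_ncard hsub hSfin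
      omega
    obtain ⟨b, hb, hbmin⟩ := Set.exists_min_image (R \ S) f hfin.diff hne
    refine ⟨insert b S, ?_, ?_, ?_⟩
    · exact Set.insert_subset hb.1 hSR
    · rw [Set.ncard_insert_of_notMem hb.2 hSfin, hcard]
    · rintro a ha x hx
      have hx' : x ∈ R \ S := ⟨hx.1, fun h => hx.2 (Set.mem_insert_of_mem _ h)⟩
      rcases ha with rfl | ha
      · exact hbmin x hx'
      · exact hmin a ha x hx'

namespace WGraph

variable (G : WGraph V)

@[simp] theorem walkWeight_nil (u : V) : G.walkWeight u [] = 0 := rfl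

@[simp] theorem walkWeight_cons (u x : V) (p : List V) :
    G.walkWeight u (x :: p) = G.w u x + G.walkWeight x p := rfl

theorem walkWeight_append : ∀ (a : List V) (u : V) (b : List V),
    G.walkWeight u (a ++ b) = G.walkWeight u a + G.walkWeight (a.getLastD u) b
  | [], u, b => by simp
  | x :: a, u, b => by
    rw [List.cons_append, walkWeight_cons, walkWeight_cons,
      walkWeight_append a x b, List.getLastD_cons, add_assoc]

theorem dist_le_walkWeight {u v : V} {p : List V} (h : WalkEnds u p v) :
    G.dist u v ≤ G.walkWeight u p := sInf_le ⟨p, h, rfl⟩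

theorem dist_self_le (u : V) : G.dist u u ≤ 0 := G.dist_le_walkWeight (rfl : WalkEnds u [] u)

variable {G}

theorem walkWeight_pos (hpos : G.Positive) (u x : V) (p : List V) :
    0 < G.walkWeight u (x :: p) :=
  lt_of_lt_of_le (hpos u x) (by rw [walkWeight_cons]; exact le_self_add)

section PrefixLemmas

variable {u s : V} {p : List V}
  (hpos : G.Positive) (hw : WalkEnds u p s)
  (hmin : G.walkWeight u p = G.dist u s) (hne : G.dist u s ≠ ⊤)

omit hpos in
include hw hmin hne in
theorem walkWeight_split {i : ℕ} (hi : i < p.length) :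
    G.walkWeight u p
      = G.walkWeight u (p.take (i + 1)) + G.walkWeight p[i] (p.drop (i + 1)) := by
  conv_lhs => rw [← List.take_append_drop (i + 1) p]
  rw [G.walkWeight_append, myGetLastD_take hi]

include hw hmin hne in
theorem prefix_dist {i : ℕ} (hi : i < p.length) :
    G.walkWeight u (p.take (i + 1)) = G.dist u p[i] := by
  have hends : WalkEnds u (p.take (i + 1)) p[i] := myGetLastD_take hi u
  have hW := walkWeight_split hw hmin hne hi
  refine le_antisymm ?_ (G.dist_le_walkWeight hends)
  by_contra hlt
  push_neg at hlt
  rw [dist] at hlt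
  obtain ⟨c, ⟨r, hr, hrw⟩, hc⟩ := sInf_lt_iff.mp hlt
  subst hrw
  -- splice r with the tail of p
  have hq : WalkEnds u (r ++ p.drop (i + 1)) s := by
    have hs' : s = (p.drop (i + 1)).getLastD p[i] := by
      have := hw
      rw [WalkEnds, ← List.take_append_drop (i + 1) p, myGetLastD_append,
        myGetLastD_take hi] at this
      exact this.symm
    rw [WalkEnds, myGetLastD_append, hr, ← hs']
  have hdropne : G.walkWeight p[i] (p.drop (i + 1)) ≠ ⊤ := by
    intro h
    rw [h, add_top, hmin] at hW
    exact hne hW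
  have hlt2 : G.walkWeight u (r ++ p.drop (i + 1)) < G.dist u s := by
    rw [G.walkWeight_append, hr, ← hmin, hW]
    exact ENNReal.add_lt_add_right hdropne hc
  exact absurd (G.dist_le_walkWeight hq) (not_le.mpr hlt2)

include hpos hw hmin hne in
theorem prefix_weight_ne_top {i : ℕ} (hi : i < p.length) :
    G.walkWeight u (p.take (i + 1)) ≠ ⊤ := by
  intro h
  have hW := walkWeight_split hw hmin hne hi
  rw [h, top_add, hmin] at hW
  exact hne hW

include hpos hw hmin hne in
theorem dist_lt_of_lt {i j : ℕ} (hij : i < j) (hj : j < p.length) :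
    G.dist u (p[i]'(hij.trans hj)) < G.dist u p[j] := by
  have hi : i < p.length := hij.trans hj
  rw [← prefix_dist hw hmin hne hi, ← prefix_dist hw hmin hne hj]
  have htt : (p.take (j + 1)).take (i + 1) = p.take (i + 1) := by
    rw [List.take_take, min_eq_left (by omega)]
  have hlen : (p.take (j + 1)).length = j + 1 := by
    rw [List.length_take, min_eq_left (by omega)]
  have hdlen : ((p.take (j + 1)).drop (i + 1)).length = j - i := by
    rw [List.length_drop, hlen]
    omega
  have hdnil : (p.take (j + 1)).drop (i + 1) ≠ [] := by
    intro h
    rw [h] at hdlen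
    simp at hdlen
    omega
  obtain ⟨y, t, hyt⟩ := List.exists_cons_of_ne_nil hdnil
  have hsplit : p.take (j + 1) = p.take (i + 1) ++ ((p.take (j + 1)).drop (i + 1)) := by
    conv_lhs => rw [← List.take_append_drop (i + 1) (p.take (j + 1))]
    rw [htt]
  have hlastD : (p.take (i + 1)).getLastD u = p[i] := myGetLastD_take hi u
  rw [hsplit, G.walkWeight_append, hlastD, hyt]
  exact ENNReal.lt_add_right (prefix_weight_ne_top hpos hw hmin hne hi)
    (walkWeight_pos hpos _ y t).ne'

include hpos hw hmin hne in
theorem get_mem_reach {i : ℕ} (hi : i < p.length) : p[i] ∈ G.Reach u := by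
  have hd : G.walkWeight u (p.take (i + 1)) = G.dist u p[i] :=
    prefix_dist hw hmin hne hi
  obtain ⟨y, t, hyt⟩ := List.exists_cons_of_ne_nil
    (List.ne_nil_of_length_pos (by omega) : p ≠ [])
  have hpos' : 0 < G.dist u p[i] := by
    rw [← hd, hyt]
    exact walkWeight_pos hpos _ y _
  constructor
  · intro h
    rw [h] at hpos'
    exact absurd (G.dist_self_le u) (not_le.mpr hpos')
  · intro h
    have hW := walkWeight_split hw hmin hne hi
    rw [hmin, hd, h] at hW
    exact hne (by rw [hW, top_add])

end PrefixLemmas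

theorem length_le_ncard [Finite V] (hpos : G.Positive) {u s : V} {p : List V}
    (hw : WalkEnds u p s) (hmin : G.walkWeight u p = G.dist u s)
    (hne : G.dist u s ≠ ⊤) {ρ : ℕ} {S : Set V} (hS : G.IsClosest ρ u S)
    (hsS : s ∈ S) : p.length ≤ S.ncard := by
  rcases Nat.eq_zero_or_pos p.length with h0 | hL
  · simp [h0]
  have hpne : p ≠ [] := List.ne_nil_of_length_pos hL
  have hlast : p[p.length - 1]'(by omega) = s := by
    have h1 := hw
    rw [WalkEnds, myGetLastD_of_ne_nil hpne, List.getLast_eq_getElem] at h1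
    exact h1
  have hmem : ∀ i (hi : i < p.length), p[i] ∈ S := by
    intro i hi
    rcases Nat.lt_or_ge i (p.length - 1) with hilt | hige
    · by_contra hx
      have hreach : p[i] ∈ G.Reach u := get_mem_reach hpos hw hmin hne hi
      have hlt : G.dist u p[i] < G.dist u s := by
        have := dist_lt_of_lt hpos hw hmin hne hilt (by omega : p.length - 1 < p.length)
        rwa [hlast] at this
      exact absurd (hS.2.2 s hsS p[i] ⟨hreach, hx⟩) (not_le.mpr hlt)
    · have : i = p.length - 1 := by omega
      subst this
      rw [hlast]
      exact hsS
  let g : Fin p.length → S := fun i => ⟨p[i.val]'i.isLt, hmem i.val i.isLt⟩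
  have key : ∀ a b : Fin p.length, a.val < b.val →
      p[a.val]'a.isLt ≠ p[b.val]'b.isLt := by
    intro a b h heq
    have hlt := dist_lt_of_lt hpos hw hmin hne h b.isLt
    rw [heq] at hlt
    exact lt_irrefl _ hlt
  have hginj : Function.Injective g := by
    intro a b hab
    have hval : p[a.val]'a.isLt = p[b.val]'b.isLt := congrArg Subtype.val hab
    rcases lt_trichotomy a.val b.val with h | h | h
    · exact absurd hval (key a b h)
    · exact Fin.ext h
    · exact absurd hval.symm (key b a h)
  have := Nat.card_le_card_of_injective g hginj
  simpa [Nat.card_coe_set_eq] using this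

end WGraph

end AuxLemmas

/-- if `u` has at least `k+1` reachable vertices but lacks a
`(k,k+1)`-ball (undirected, strictly positive weights), then the
shortest-path-with-fewest-hops tree connecting `u` to the union of all
`(k+1)`-closest neighbor sets has height exactly `k+1`. -/
theorem stmt3 {V : Type*} [Finite V] [DecidableEq V] (G : WGraph V)
    (hsym : G.Symm) (hpos : G.Positive) (k : ℕ) (hk : 1 ≤ k) (u : V)
    (hR : k + 1 ≤ (G.Reach u).ncard) (hball : ¬ G.HasBall k (k + 1) u) :
    ∀ T : FHTree G u (G.closestUnion (k + 1) u),
      (∀ s hs, (T.walk s hs).length ≤ k + 1) ∧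
        ∃ s, ∃ hs : s ∈ G.closestUnion (k + 1) u, (T.walk s hs).length = k + 1 := by
  intro T
  have hA : ∀ s hs, (T.walk s hs).length ≤ k + 1 := by
    intro s hs
    obtain ⟨S, hSc, hsS⟩ := id hs
    have hne : G.dist u s ≠ ⊤ := (hSc.1 hsS).2
    have hcard : S.ncard = k + 1 := by rw [hSc.2.1, min_eq_right hR]
    have := G.length_le_ncard hpos (T.ends s hs) (T.minWeight s hs) hne hSc hsS
    omega
  refine ⟨hA, ?_⟩
  -- construct a closest set
  obtain ⟨S₀, hS₀R, hS₀card, hS₀min⟩ :=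
    myExists_min_subset (G.Reach u).toFinite (G.dist u) (k + 1) hR
  have hclosest : G.IsClosest (k + 1) u S₀ :=
    ⟨hS₀R, by rw [hS₀card, min_eq_right hR], hS₀min⟩
  have hex : ∃ v ∈ S₀, ¬ G.hopdist u v ≤ (k : ℕ∞) := by
    by_contra h
    push_neg at h
    exact hball ⟨S₀, hclosest, h⟩
  obtain ⟨v, hvS₀, hvhop⟩ := hex
  have hv : v ∈ G.closestUnion (k + 1) u := ⟨S₀, hclosest, hvS₀⟩
  refine ⟨v, hv, ?_⟩
  have h1 : ((T.walk v hv).length : ℕ∞) = G.hopdist u v := T.fewHops v hv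
  have h2 : ¬ ((T.walk v hv).length : ℕ∞) ≤ (k : ℕ∞) := by rw [h1]; exact hvhop
  have h3 : k + 1 ≤ (T.walk v hv).length := by
    by_contra h
    push_neg at h
    exact h2 (Nat.cast_le.mpr (by omega))
  exact le_antisymm (hA v hv) h3
end

section
/- In an undirected graph with strictly positive edge weights, let u ≠ x be two vertices and let 𝒫 be the set of vertices v lacking a (k,k+1)-ball whose k-constrained shortest path (which is a path by an earlier lemma) ends with second-to-last vertex x and last vertex u. Then for any two vertices i, j ∈ 𝒫, the tiebreaking candidate sets B(i) and B(j) are equal, where B(v) is the set of vertices in the (k+1)-constrained shortest path tree of v that are not in the k-constrained shortest path tree of v. -/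
open scoped ENNReal Classical

namespace Stmt8Aux
open WGraph
open scoped NNReal
variable {V : Type*}

lemma getLastD_cons (a b : V) (p : List V) : (b :: p).getLastD a = p.getLastD b := by
  cases p <;> simp [List.getLastD]

lemma getLastD_append (p q : List V) (a : V) :
    (p ++ q).getLastD a = q.getLastD (p.getLastD a) := by
  induction p generalizing a with
  | nil => simp
  | cons b t ih => rw [List.cons_append, getLastD_cons, ih, getLastD_cons]

lemma getLastD_concat (p : List V) (a c : V) : (p ++ [c]).getLastD a = c := by
  rw [getLastD_append]; rfl

lemma getLastD_take_succ (l : List V) (n : ℕ) (h : n < l.length) (a : V) :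
    (l.take (n+1)).getLastD a = l[n] := by
  induction l generalizing n a with
  | nil => simp at h
  | cons c t ih =>
    cases n with
    | zero => simp
    | succ m =>
      simp only [List.take_succ_cons, List.getElem_cons_succ]
      rw [getLastD_cons]
      exact ih m (by simpa using h) c

lemma getLastD_mem (l : List V) (h : l ≠ []) (a : V) : l.getLastD a ∈ l := by
  rw [List.getLastD_eq_getLast?, List.getLast?_eq_getLast h]
  exact List.getLast_mem h

lemma eq_dropLast_append (l : List V) (h : l ≠ []) (a : V) :
    l = l.dropLast ++ [l.getLastD a] := by
  rw [List.getLastD_eq_getLast?, List.getLast?_eq_getLast h]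
  exact (List.dropLast_append_getLast h).symm

variable (G : WGraph V)

lemma ww_append (a : V) (p q : List V) :
    G.walkWeight a (p ++ q) = G.walkWeight a p + G.walkWeight (p.getLastD a) q := by
  induction p generalizing a with
  | nil => simp [WGraph.walkWeight]
  | cons b t ih =>
    simp only [List.cons_append, WGraph.walkWeight, List.append_eq]
    rw [ih b, getLastD_cons, add_assoc]

lemma ww_pos (hpos : G.Positive) (a : V) (p : List V) (h : p ≠ []) :
    0 < G.walkWeight a p := by
  cases p with
  | nil => exact absurd rfl h
  | cons b t => exact lt_of_lt_of_le (hpos a b) (by simp [WGraph.walkWeight, le_self_add])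

lemma ww_reverse (hsym : G.Symm) : ∀ (p : List V) (a c : V),
    G.walkWeight c (p.reverse ++ [a]) = G.walkWeight a (p ++ [c]) := by
  intro p
  induction p with
  | nil => intro a c; simp [WGraph.walkWeight, hsym a c]
  | cons d t ih =>
    intro a c
    have : (d :: t).reverse ++ [a] = (t.reverse ++ [d]) ++ [a] := by simp
    rw [this, ww_append, ih d c, getLastD_concat]
    show _ = G.w a d + G.walkWeight d (t ++ [c])
    simp only [WGraph.walkWeight, add_zero]
    rw [hsym d a]
    ring

lemma dist_le {a b : V} {p : List V} (h : WalkEnds a p b) :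
    G.dist a b ≤ G.walkWeight a p := sInf_le ⟨p, h, rfl⟩

lemma dist_self (a : V) : G.dist a a = 0 :=
  le_antisymm (dist_le G (p := []) rfl) zero_le

lemma exists_walk_lt {a b : V} {c : ℝ≥0∞} (h : G.dist a b < c) :
    ∃ p, WalkEnds a p b ∧ G.walkWeight a p < c := by
  obtain ⟨d, ⟨p, hp, hw⟩, hlt⟩ := sInf_lt_iff.mp h
  exact ⟨p, hp, hw ▸ hlt⟩

lemma dist_symm (hsym : G.Symm) (a b : V) : G.dist a b = G.dist b a := by
  have key : ∀ a b : V, G.dist b a ≤ G.dist a b := by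
    intro a b
    refine le_sInf ?_
    rintro c ⟨p, hp, rfl⟩
    rcases eq_or_ne p [] with rfl | hne
    · have hab : a = b := hp
      subst hab; rw [dist_self G]; exact zero_le
    · have hsplit : p = p.dropLast ++ [b] := by
        conv_lhs => rw [eq_dropLast_append p hne a]
        rw [hp]
      have hends : WalkEnds b (p.dropLast.reverse ++ [a]) a := getLastD_concat _ _ _
      calc G.dist b a ≤ G.walkWeight b (p.dropLast.reverse ++ [a]) := dist_le G hends
        _ = G.walkWeight a (p.dropLast ++ [b]) := ww_reverse G hsym _ _ _
        _ = G.walkWeight a p := by rw [← hsplit]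
  exact le_antisymm (key b a) (key a b)

lemma dist_le_add_w (a b c : V) : G.dist a c ≤ G.dist a b + G.w b c := by
  by_cases hb : G.dist a b = ⊤
  · simp [hb]
  refine ENNReal.le_of_forall_pos_le_add fun ε hε _ => ?_
  obtain ⟨p, hp, hw⟩ := exists_walk_lt G (ENNReal.lt_add_right hb (ENNReal.coe_ne_zero.mpr hε.ne'))
  have hends : WalkEnds a (p ++ [c]) c := getLastD_concat _ _ _
  calc G.dist a c ≤ G.walkWeight a (p ++ [c]) := dist_le G hends
    _ = G.walkWeight a p + G.w b c := by
        rw [ww_append, hp]; simp [WGraph.walkWeight]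
    _ ≤ (G.dist a b + ε) + G.w b c := add_le_add_left hw.le _
    _ = G.dist a b + G.w b c + ε := by ring

lemma dist_triangle (a b c : V) : G.dist a c ≤ G.dist a b + G.dist b c := by
  by_cases hb : G.dist a b = ⊤
  · simp [hb]
  by_cases hc : G.dist b c = ⊤
  · simp [hc]
  refine ENNReal.le_of_forall_pos_le_add fun ε hε _ => ?_
  have hε2 : ((ε/2 : ℝ≥0) : ℝ≥0∞) ≠ 0 := ENNReal.coe_ne_zero.mpr (half_pos hε).ne'
  obtain ⟨p, hp, hwp⟩ := exists_walk_lt G (ENNReal.lt_add_right hb hε2)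
  obtain ⟨q, hq, hwq⟩ := exists_walk_lt G (ENNReal.lt_add_right hc hε2)
  have hends : WalkEnds a (p ++ q) c := by
    show (p ++ q).getLastD a = c
    rw [getLastD_append, hp]; exact hq
  calc G.dist a c ≤ G.walkWeight a (p ++ q) := dist_le G hends
    _ = G.walkWeight a p + G.walkWeight b q := by rw [ww_append, hp]
    _ ≤ (G.dist a b + ((ε/2 : ℝ≥0) : ℝ≥0∞)) + (G.dist b c + ((ε/2 : ℝ≥0) : ℝ≥0∞)) :=
        add_le_add hwp.le hwq.le
    _ = G.dist a b + G.dist b c + (((ε/2 : ℝ≥0) : ℝ≥0∞) + ((ε/2 : ℝ≥0) : ℝ≥0∞)) := by ring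
    _ = G.dist a b + G.dist b c + ε := by
        rw [← ENNReal.coe_add, add_halves]

lemma hopdist_le {a b : V} (hne : G.dist a b ≠ ⊤) {p : List V}
    (h1 : WalkEnds a p b) (h2 : G.walkWeight a p = G.dist a b) :
    G.hopdist a b ≤ (p.length : ℕ∞) := by
  rw [WGraph.hopdist, if_neg hne]
  exact sInf_le ⟨p, h1, h2, rfl⟩

lemma prefix_opt {a : V} {p : List V}
    (ht : G.dist a (p.getLastD a) ≠ ⊤)
    (hopt : G.walkWeight a p = G.dist a (p.getLastD a))
    {q : List V} (hq : q <+: p) :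
    G.walkWeight a q = G.dist a (q.getLastD a) := by
  obtain ⟨r, rfl⟩ := hq
  refine le_antisymm ?_ (dist_le G rfl)
  by_contra h
  push_neg at h
  obtain ⟨q', he', hw'⟩ := exists_walk_lt G h
  have hends : WalkEnds a (q' ++ r) ((q ++ r).getLastD a) := by
    show (q' ++ r).getLastD a = _
    rw [getLastD_append, getLastD_append, he']
  have hle := dist_le G hends
  rw [ww_append] at hle
  rw [ww_append] at hopt
  have hrne : G.walkWeight (q.getLastD a) r ≠ ⊤ := by
    intro htop
    rw [htop, add_top] at hopt
    exact ht hopt.symm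
  have : G.dist a ((q ++ r).getLastD a) < G.dist a ((q ++ r).getLastD a) := by
    calc G.dist a ((q ++ r).getLastD a)
        ≤ G.walkWeight a q' + G.walkWeight (q.getLastD a) r := by rw [← he']; exact hle
      _ < G.walkWeight a q + G.walkWeight (q.getLastD a) r :=
          (ENNReal.add_lt_add_iff_right hrne).mpr hw'
      _ = G.dist a ((q ++ r).getLastD a) := hopt
  exact absurd this (lt_irrefl _)


lemma mem_closest {G : WGraph V} {ρ : ℕ} {v : V} {S : Set V} (hS : G.IsClosest ρ v S)
    {s y : V} (hs : s ∈ S) (hy : G.dist v y < G.dist v s) (hyv : y ≠ v) : y ∈ S := by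
  by_contra hns
  have hyR : y ∈ G.Reach v := ⟨hyv, ne_top_of_lt hy⟩
  exact absurd (hS.2.2 s hs y ⟨hyR, hns⟩) (not_le.mpr hy)

def tier (G : WGraph V) (k : ℕ) (v : V) : Set V :=
  {w | (w ∈ G.Reach v ∧ w ∉ G.closestUnion k v) ∧
    ∀ y ∈ G.Reach v, y ∉ G.closestUnion k v → G.dist v w ≤ G.dist v y}

lemma perVertex [Finite V] [DecidableEq V] (G : WGraph V)
    (hsym : G.Symm) (hpos : G.Positive) (k : ℕ) (hk : 1 ≤ k) (u x v : V)
    (hv : ¬ G.HasBall k (k + 1) v)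
    (Tk : FHTree G v (G.closestUnion k v))
    (Tk1 : FHTree G v (G.closestUnion (k + 1) v))
    (hEnd : ∃ s hs, (∃ l, v :: Tk.walk s hs = l ++ [x, u]) ∧
      ∀ t ht, Tk.walk t ht <+: Tk.walk s hs) :
    Tk1.verts \ Tk.verts = tier G k v ∧
    (tier G k v).Nonempty ∧
    (∀ w ∈ tier G k v, G.dist v w = G.dist v u + G.w u w) ∧
    G.dist v u = G.dist v x + G.w x u ∧
    G.dist v u ≠ ⊤ ∧
    (x = v ∨ x ∈ G.closestUnion k v) ∧
    u ∈ G.closestUnion k v ∧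
    (∀ b, (b = v ∨ b ∈ G.closestUnion k v) → b ≠ x → b ≠ u →
      ∃ s, G.dist v b + (s + G.w x u) = G.dist v u ∧ G.dist x b ≤ s) := by
  classical
  obtain ⟨s₀, hs₀, ⟨l, hform⟩, hpref⟩ := hEnd
  have hsu : s₀ = u := by
    have h1 := Tk.ends s₀ hs₀
    have h2 := congrArg (fun t : List V => t.getLastD v) hform
    rw [getLastD_cons, getLastD_append, getLastD_cons] at h2
    have h3 : ([u] : List V).getLastD x = u := rfl
    rw [h3] at h2
    exact (h1 : (Tk.walk s₀ hs₀).getLastD v = s₀).symm.trans h2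
  subst hsu
  set P : List V := Tk.walk s₀ hs₀ with hPdef
  have hPne : P ≠ [] := by
    intro h
    have := congrArg List.length hform
    rw [show v :: P = [v] ++ P by rfl] at this
    simp [h] at this
  have hlast : P.getLastD v = s₀ := Tk.ends s₀ hs₀
  -- from here on, u = s₀
  have hwP : G.walkWeight v P = G.dist v s₀ := Tk.minWeight s₀ hs₀
  have hhP : (P.length : ℕ∞) = G.hopdist v s₀ := Tk.fewHops s₀ hs₀
  have hUreach : ∀ z, z ∈ G.closestUnion k v → z ∈ G.Reach v := by
    rintro z ⟨S', hS', hz⟩; exact hS'.1 hz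
  have hU1reach : ∀ z, z ∈ G.closestUnion (k+1) v → z ∈ G.Reach v := by
    rintro z ⟨S', hS', hz⟩; exact hS'.1 hz
  have hdu_ne : G.dist v s₀ ≠ ⊤ := (hUreach s₀ hs₀).2
  have hprefopt : ∀ q, q <+: P → G.walkWeight v q = G.dist v (q.getLastD v) := by
    intro q hq
    exact prefix_opt G (by rwa [hlast]) (by rwa [hlast]) hq
  have hDne : ∀ n, G.walkWeight v (P.take n) ≠ ⊤ := by
    intro n
    intro htop
    have h := hwP
    conv_lhs at h => rw [← List.take_append_drop n P]
    rw [ww_append, htop, top_add] at h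
    exact hdu_ne h.symm
  have hDle : ∀ n, G.walkWeight v (P.take n) ≤ G.dist v s₀ := by
    intro n
    conv_rhs => rw [← hwP, ← List.take_append_drop n P]
    rw [ww_append]
    exact le_self_add
  have hDlt : ∀ m n, m < n → n ≤ P.length → G.walkWeight v (P.take m) < G.walkWeight v (P.take n) := by
    intro m n hmn hn
    have hsplit : P.take n = P.take m ++ (P.take n).drop m := by
      conv_lhs => rw [← List.take_append_drop m (P.take n)]
      rw [List.take_take, min_eq_left hmn.le]
    have hlen : ((P.take n).drop m).length = n - m := by
      simp [List.length_take, min_eq_left hn]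
    have hne : (P.take n).drop m ≠ [] := by
      intro h; rw [h] at hlen; simp at hlen; omega
    rw [hsplit, ww_append]
    exact ENNReal.lt_add_right (hDne m) (ww_pos G hpos _ _ hne).ne'
  have hdiste : ∀ n, G.dist v ((P.take n).getLastD v) = G.walkWeight v (P.take n) :=
    fun n => (hprefopt _ (List.take_prefix n P)).symm
  have hDinj : ∀ m n, m ≤ P.length → n ≤ P.length →
      G.walkWeight v (P.take m) = G.walkWeight v (P.take n) → m = n := by
    intro m n hm hn h
    rcases lt_trichotomy m n with hlt | heq | hlt
    · exact absurd h (hDlt m n hlt hn).ne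
    · exact heq
    · exact absurd h.symm (hDlt n m hlt hm).ne
  have hPlen0 : P.length ≠ 0 := fun h => hPne (List.length_eq_zero_iff.mp h)
  have htake_ne : ∀ n, 1 ≤ n → P.take n ≠ [] := by
    intro n hn h
    have h0 : (P.take n).length = 0 := by rw [h]; rfl
    rw [List.length_take] at h0
    omega
  have he_mem : ∀ n, 1 ≤ n → (P.take n).getLastD v ∈ P :=
    fun n hn => List.take_subset n P (getLastD_mem _ (htake_ne n hn) v)
  have hvP : v ∉ P := by
    intro hmem
    obtain ⟨m, hm, hPm⟩ := List.mem_iff_getElem.mp hmem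
    have h1 : (P.take (m+1)).getLastD v = v := by rw [getLastD_take_succ P m hm v, hPm]
    have h2 := hdiste (m+1)
    rw [h1, dist_self] at h2
    exact absurd h2.symm (ww_pos G hpos _ _ (htake_ne (m+1) (by omega))).ne'
  have hUsubP : ∀ z (hz : z ∈ G.closestUnion k v), ∃ n, 1 ≤ n ∧ n ≤ P.length ∧
      Tk.walk z hz = P.take n ∧ z = (P.take n).getLastD v ∧ G.hopdist v z = (n : ℕ∞) := by
    intro z hz
    have hzv : z ≠ v := (hUreach z hz).1
    have hpre : Tk.walk z hz <+: P := hpref z hz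
    have hlen' : (Tk.walk z hz).length ≤ P.length := hpre.length_le
    have heq : Tk.walk z hz = P.take (Tk.walk z hz).length := List.prefix_iff_eq_take.mp hpre
    have hends : (Tk.walk z hz).getLastD v = z := Tk.ends z hz
    have hne : Tk.walk z hz ≠ [] := by
      intro h; rw [h] at hends; exact hzv hends.symm
    refine ⟨(Tk.walk z hz).length, ?_, hlen', heq, ?_, ?_⟩
    · rcases Nat.eq_zero_or_pos (Tk.walk z hz).length with h | h
      · exact absurd (List.length_eq_zero_iff.mp h) hne
      · exact h
    · rw [← heq, hends]
    · rw [← Tk.fewHops z hz]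
  have hU_le : ∀ z ∈ G.closestUnion k v, G.dist v z ≤ G.dist v s₀ := by
    intro z hz
    obtain ⟨n, h1, h2, _, he, _⟩ := hUsubP z hz
    rw [he, hdiste n]; exact hDle n
  obtain ⟨S, hS, huS⟩ := hs₀
  have hs₀' : s₀ ∈ G.closestUnion k v := ⟨S, hS, huS⟩
  have hSsubU : ∀ z ∈ S, z ∈ G.closestUnion k v := fun z hz => ⟨S, hS, hz⟩
  have hPsubS : ∀ y ∈ P, y ∈ S := by
    intro y hy
    obtain ⟨m, hm, hPm⟩ := List.mem_iff_getElem.mp hy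
    have hye : y = (P.take (m+1)).getLastD v := by rw [getLastD_take_succ P m hm v, hPm]
    rcases eq_or_lt_of_le (Nat.succ_le_of_lt hm) with heq | hlt
    · rw [Nat.succ_eq_add_one] at heq
      rw [heq, List.take_length, hlast] at hye
      exact hye ▸ huS
    · have hylt : G.dist v y < G.dist v s₀ := by
        rw [hye, hdiste (m+1)]
        have h := hDlt (m+1) P.length hlt le_rfl
        rwa [List.take_length, hwP] at h
      exact mem_closest hS huS hylt (fun h => hvP (h ▸ hy))
  have hUPset : G.closestUnion k v = {y | y ∈ P} := by
    apply Set.Subset.antisymm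
    · intro z hz; obtain ⟨n, h1, _, _, he, _⟩ := hUsubP z hz; exact he ▸ he_mem n h1
    · intro y hy; exact hSsubU y (hPsubS y hy)
  have hUS : G.closestUnion k v = S := by
    apply Set.Subset.antisymm
    · intro z hz
      obtain ⟨n, h1, _, _, he, _⟩ := hUsubP z hz
      exact hPsubS z (he ▸ he_mem n h1)
    · intro z hz; exact hSsubU z hz
  have hPnd : P.Nodup := by
    rw [List.nodup_iff_injective_get]
    intro a b hab
    have key : ∀ c : Fin P.length, G.walkWeight v (P.take (c.val+1)) = G.dist v (P.get c) := by
      intro c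
      rw [← hdiste (c.val+1), getLastD_take_succ P c.val c.isLt v]
      rfl
    have h1 := key a
    rw [hab, ← key b] at h1
    have := hDinj (a.val+1) (b.val+1) (Nat.succ_le_of_lt a.isLt) (Nat.succ_le_of_lt b.isLt) h1
    exact Fin.ext (by omega)
  have hcardPset : ({y | y ∈ P} : Set V).ncard = P.length := by
    rw [show ({y | y ∈ P} : Set V) = ↑P.toFinset by ext; simp, Set.ncard_coe_finset]
    exact List.toFinset_card_of_nodup hPnd
  have hlenP : P.length = min (G.Reach v).ncard k := by
    rw [← hcardPset, ← hUPset, hUS]; exact hS.2.1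
  have hlen_le_k : P.length ≤ k := by omega
  have hRfin : (G.Reach v).Finite := Set.toFinite _
  have hhopU : ∀ z ∈ S, G.hopdist v z ≤ (k : ℕ∞) := by
    intro z hz
    obtain ⟨n, _, hn2, _, _, hhop⟩ := hUsubP z (hSsubU z hz)
    rw [hhop]
    exact Nat.cast_le.mpr (le_trans hn2 hlen_le_k)
  have hRbig : k + 1 ≤ (G.Reach v).ncard := by
    by_contra hle
    push_neg at hle
    have hcard : S.ncard = (G.Reach v).ncard := by rw [hS.2.1]; omega
    have hSR : S = G.Reach v := Set.eq_of_subset_of_ncard_le hS.1 (le_of_eq hcard.symm) hRfin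
    apply hv
    refine ⟨S, ⟨hS.1, by rw [hcard]; omega, ?_⟩, hhopU⟩
    intro a ha b hb
    exact absurd (hSR ▸ hb.1) hb.2
  have hlenk : P.length = k := by omega
  have houtside : ∀ y ∈ G.Reach v, y ∉ G.closestUnion k v → G.dist v s₀ < G.dist v y := by
    intro y hyR hyU
    have hySn : y ∉ S := fun h => hyU (hSsubU y h)
    have hle : G.dist v s₀ ≤ G.dist v y := hS.2.2 s₀ huS y ⟨hyR, hySn⟩
    rcases lt_or_eq_of_le hle with hlt | heq
    · exact hlt
    · exfalso
      apply hyU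
      refine ⟨insert y (S \ {s₀}), ⟨?_, ?_, ?_⟩, Set.mem_insert y _⟩
      · intro a ha
        rcases Set.mem_insert_iff.mp ha with rfl | haS
        · exact hyR
        · exact hS.1 haS.1
      · have h1 : y ∉ S \ {s₀} := fun h => hySn h.1
        rw [Set.ncard_insert_of_notMem h1 (Set.toFinite _),
          Set.ncard_diff_singleton_of_mem huS, hS.2.1]
        omega
      · intro a ha b hb
        have hbu : G.dist v s₀ ≤ G.dist v b := by
          by_cases hbs : b = s₀
          · rw [hbs]
          · have hbS : b ∉ S := fun h => hb.2 (Set.mem_insert_of_mem _ ⟨h, hbs⟩)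
            exact hS.2.2 s₀ huS b ⟨hb.1, hbS⟩
        have hau : G.dist v a ≤ G.dist v s₀ := by
          rcases Set.mem_insert_iff.mp ha with rfl | haS
          · exact heq.ge
          · exact hU_le a (hSsubU a haS.1)
        exact le_trans hau hbu
  have hinsert : ∀ w ∈ G.Reach v, w ∉ G.closestUnion k v →
      (∀ y ∈ G.Reach v, y ∉ G.closestUnion k v → G.dist v w ≤ G.dist v y) →
      G.IsClosest (k+1) v (insert w S) := by
    intro w hwR hwU hwmin
    have hwS : w ∉ S := fun h => hwU (hSsubU w h)
    refine ⟨?_, ?_, ?_⟩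
    · intro a ha
      rcases Set.mem_insert_iff.mp ha with rfl | haS
      · exact hwR
      · exact hS.1 haS
    · rw [Set.ncard_insert_of_notMem hwS (Set.toFinite _), hS.2.1]
      omega
    · intro a ha b hb
      have hbS : b ∉ S := fun h => hb.2 (Set.mem_insert_of_mem _ h)
      have hbU : b ∉ G.closestUnion k v := by rw [hUS]; exact hbS
      rcases Set.mem_insert_iff.mp ha with rfl | haS
      · exact hwmin b hb.1 hbU
      · exact le_trans (hU_le a (hSsubU a haS)) (houtside b hb.1 hbU).le
  have htier_ne : (tier G k v).Nonempty := by
    have hdiff_ne : ((G.Reach v) \ (G.closestUnion k v)).Nonempty := by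
      rw [Set.nonempty_iff_ne_empty]
      intro h
      have hsub : G.Reach v ⊆ G.closestUnion k v := Set.diff_eq_empty.mp h
      have hcard := Set.ncard_le_ncard hsub (Set.toFinite _)
      rw [hUPset, hcardPset] at hcard
      omega
    obtain ⟨w, hw, hmin⟩ := Set.exists_min_image _ (G.dist v) (Set.toFinite _) hdiff_ne
    exact ⟨w, ⟨⟨hw.1, hw.2⟩, fun y hyR hyU => hmin y ⟨hyR, hyU⟩⟩⟩
  have htier_hop : ∀ w ∈ tier G k v, (k : ℕ∞) + 1 ≤ G.hopdist v w := by
    rintro w ⟨⟨hwR, hwU⟩, hwmin⟩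
    by_contra hlt
    push_neg at hlt
    have hle : G.hopdist v w ≤ (k : ℕ∞) :=
      (ENat.lt_add_one_iff (by simp)).mp hlt
    apply hv
    refine ⟨insert w S, hinsert w hwR hwU hwmin, ?_⟩
    intro z hz
    rcases Set.mem_insert_iff.mp hz with rfl | hzS
    · exact hle
    · exact hhopU z hzS
  have hUk1 : G.closestUnion (k+1) v = G.closestUnion k v ∪ tier G k v := by
    apply Set.Subset.antisymm
    · rintro z ⟨S', hS', hz⟩
      have hcard' : S'.ncard = k + 1 := by rw [hS'.2.1]; omega
      have hSsubS' : S ⊆ S' := by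
        intro a ha
        by_contra han
        have hex : ∃ e, e ∈ S' ∧ e ∉ S := by
          by_contra hno
          push_neg at hno
          have h1 := Set.ncard_le_ncard hno (Set.toFinite _)
          have hcS : S.ncard = k := by rw [hS.2.1]; omega
          omega
        obtain ⟨e, heS', heS⟩ := hex
        have heU : e ∉ G.closestUnion k v := by rw [hUS]; exact heS
        have h1 : G.dist v e ≤ G.dist v a := hS'.2.2 e heS' a ⟨hS.1 ha, han⟩
        have h2 : G.dist v a ≤ G.dist v s₀ := hU_le a (hSsubU a ha)
        have h3 : G.dist v s₀ < G.dist v e := houtside e (hS'.1 heS') heU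
        exact absurd (le_trans h1 h2) (not_le.mpr h3)
      by_cases hzS : z ∈ S
      · exact Or.inl (hSsubU z hzS)
      · right
        have hzU : z ∉ G.closestUnion k v := by rw [hUS]; exact hzS
        refine ⟨⟨hS'.1 hz, hzU⟩, ?_⟩
        intro y hyR hyU
        by_cases hyS' : y ∈ S'
        · have hone : (S' \ S).ncard = 1 := by
            rw [Set.ncard_diff hSsubS' (Set.toFinite _)]
            have hcS : S.ncard = k := by rw [hS.2.1]; omega
            omega
          obtain ⟨e, he⟩ := Set.ncard_eq_one.mp hone
          have hz1 : z ∈ S' \ S := ⟨hz, hzS⟩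
          have hy1 : y ∈ S' \ S := ⟨hyS', fun h => hyU (hSsubU y h)⟩
          rw [he] at hz1 hy1
          rw [Set.mem_singleton_iff.mp hz1, Set.mem_singleton_iff.mp hy1]
        · exact hS'.2.2 z hz y ⟨hyR, hyS'⟩
    · intro z hz
      rcases hz with hzU | hzT
      · obtain ⟨w₀, hw₀⟩ := htier_ne
        exact ⟨insert w₀ S, hinsert w₀ hw₀.1.1 hw₀.1.2 hw₀.2,
          Set.mem_insert_of_mem _ (by rw [hUS] at hzU; exact hzU)⟩
      · exact ⟨insert z S, hinsert z hzT.1.1 hzT.1.2 hzT.2, Set.mem_insert z S⟩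
  -- analysis of the last step of an optimal walk
  have hstep : ∀ (q : List V) (b : V), q.getLastD v = b → G.walkWeight v q = G.dist v b →
      G.dist v b ≠ ⊤ → 2 ≤ q.length →
      G.walkWeight v q.dropLast = G.dist v (q.dropLast.getLastD v) ∧
      G.dist v (q.dropLast.getLastD v) < G.dist v b ∧
      (q.dropLast.getLastD v) ∈ G.Reach v ∧
      G.dist v (q.dropLast.getLastD v) + G.w (q.dropLast.getLastD v) b = G.dist v b := by
    intro q b hqe hqw hbt hql
    have hqne : q ≠ [] := by intro h; rw [h] at hql; simp at hql
    have hsplit : q = q.dropLast ++ [b] := by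
      conv_lhs => rw [eq_dropLast_append q hqne v]
      rw [hqe]
    have hq'ne : q.dropLast ≠ [] := by
      intro h
      have hlq := congrArg List.length hsplit
      rw [h] at hlq; simp at hlq; omega
    have hwsplit : G.walkWeight v q =
        G.walkWeight v q.dropLast + G.w (q.dropLast.getLastD v) b := by
      conv_lhs => rw [hsplit]
      rw [ww_append]
      simp [WGraph.walkWeight]
    have hq'opt : G.walkWeight v q.dropLast = G.dist v (q.dropLast.getLastD v) :=
      prefix_opt G (a := v) (p := q) (by rwa [hqe]) (by rwa [hqe]) ⟨[b], hsplit.symm⟩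
    have hsum : G.dist v (q.dropLast.getLastD v) + G.w (q.dropLast.getLastD v) b
        = G.dist v b := by rw [← hq'opt, ← hwsplit, hqw]
    have hzt : G.dist v (q.dropLast.getLastD v) ≠ ⊤ := by
      intro h; rw [h, top_add] at hsum; exact hbt hsum.symm
    have hlt : G.dist v (q.dropLast.getLastD v) < G.dist v b := by
      rw [← hsum]
      exact ENNReal.lt_add_right hzt (hpos _ b).ne'
    have hzv : q.dropLast.getLastD v ≠ v := by
      intro h
      have h0 := ww_pos G hpos v q.dropLast hq'ne
      rw [hq'opt, h, dist_self] at h0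
      exact lt_irrefl _ h0
    exact ⟨hq'opt, hlt, ⟨hzv, hzt⟩, hsum⟩
  -- uniqueness of optimal fewest-hop walks to path vertices
  have huniq : ∀ n, 1 ≤ n → n ≤ k → ∀ q : List V, q.getLastD v = (P.take n).getLastD v →
      G.walkWeight v q = G.dist v ((P.take n).getLastD v) → q.length = n → q = P.take n := by
    intro n
    induction n using Nat.strong_induction_on with
    | _ n IH =>
    intro hn1 hnk q hqe hqw hql
    rcases eq_or_lt_of_le hn1 with h1 | h2
    · obtain ⟨c, hc⟩ := List.length_eq_one_iff.mp (show q.length = 1 by omega)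
      obtain ⟨d, hd⟩ := List.length_eq_one_iff.mp
        (show (P.take n).length = 1 by rw [List.length_take]; omega)
      rw [hc, hd] at hqe
      rw [hc, hd]
      have : c = d := hqe
      rw [this]
    · have hbt : G.dist v ((P.take n).getLastD v) ≠ ⊤ := by rw [hdiste]; exact hDne n
      obtain ⟨hq'opt, hlt, hzR, hsum⟩ := hstep q ((P.take n).getLastD v) hqe hqw hbt (by omega)
      have hzU : q.dropLast.getLastD v ∈ G.closestUnion k v := by
        by_contra hzU
        have h3 : G.dist v ((P.take n).getLastD v) ≤ G.dist v s₀ := by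
          rw [hdiste]; exact hDle n
        exact absurd (lt_trans (houtside _ hzR hzU) hlt) (not_lt.mpr h3)
      obtain ⟨n', hn'1, hn'len, hwalk', hze, hhopz⟩ := hUsubP _ hzU
      have hqne : q ≠ [] := by
        intro h
        rw [h] at hql
        simp at hql
        omega
      have hq'len : q.dropLast.length = n - 1 := by rw [List.length_dropLast, hql]
      have hn'le : n' ≤ n - 1 := by
        have h := hopdist_le G hzR.2 (p := q.dropLast) rfl hq'opt
        rw [hhopz, hq'len] at h
        exact_mod_cast h
      have hnew_w : G.walkWeight v (P.take n' ++ [(P.take n).getLastD v])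
          = G.dist v ((P.take n).getLastD v) := by
        rw [ww_append]
        have h1 : G.walkWeight v (P.take n') = G.dist v (q.dropLast.getLastD v) := by
          rw [hze, hdiste]
        have h2 : G.walkWeight ((P.take n').getLastD v) [(P.take n).getLastD v]
            = G.w (q.dropLast.getLastD v) ((P.take n).getLastD v) := by
          rw [← hze]; simp [WGraph.walkWeight]
        rw [h1, h2, hsum]
      have hhopen : G.hopdist v ((P.take n).getLastD v) ≤ ((n' + 1 : ℕ) : ℕ∞) := by
        have h := hopdist_le G hbt (getLastD_concat _ _ _) hnew_w
        rwa [List.length_append, List.length_take, min_eq_left (by omega : n' ≤ P.length),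
          List.length_singleton] at h
      have hhopn : G.hopdist v ((P.take n).getLastD v) = (n : ℕ∞) := by
        have hmem : (P.take n).getLastD v ∈ G.closestUnion k v := by
          rw [hUPset]; exact he_mem n (by omega)
        obtain ⟨n'', _, hn''len, _, hze'', hhop''⟩ := hUsubP _ hmem
        have heqn : n'' = n := by
          apply hDinj n'' n hn''len (by omega)
          rw [← hdiste n'', ← hdiste n, ← hze'']
        rw [hhop'', heqn]
      have hn'eq : n' = n - 1 := by
        rw [hhopn] at hhopen
        have h : n ≤ n' + 1 := by exact_mod_cast hhopen
        omega
      have hq' : q.dropLast = P.take n' := by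
        apply IH n' (by omega) hn'1 (by omega)
        · exact hze.symm ▸ rfl
        · rw [← hze]; exact hq'opt
        · omega
      have htaken : P.take n = P.take (n-1) ++ [(P.take n).getLastD v] := by
        have hne1 : P.take n ≠ [] := htake_ne n (by omega)
        have hdl : (P.take n).dropLast = P.take (n-1) := by
          rw [List.dropLast_eq_take, List.length_take, List.take_take]
          congr 1
          omega
        conv_lhs => rw [eq_dropLast_append (P.take n) hne1 v]
        rw [hdl]
      conv_lhs => rw [eq_dropLast_append q hqne v]
      rw [hqe, hq', hn'eq, ← htaken]
  -- walks of the (k+1)-tree to k-closest vertices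
  have hwalkU : ∀ z (hz1 : z ∈ G.closestUnion (k+1) v), z ∈ G.closestUnion k v →
      ∃ n, 1 ≤ n ∧ n ≤ k ∧ Tk1.walk z hz1 = P.take n ∧ z = (P.take n).getLastD v := by
    intro z hz1 hzU
    obtain ⟨n, hn1, hnlen, _, hze, hhopz⟩ := hUsubP z hzU
    refine ⟨n, hn1, by omega, ?_, hze⟩
    apply huniq n hn1 (by omega)
    · exact (Tk1.ends z hz1).trans hze
    · rw [← hze]; exact Tk1.minWeight z hz1
    · have h := Tk1.fewHops z hz1
      rw [hhopz] at h
      exact_mod_cast h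
  -- walks of the (k+1)-tree to tier vertices
  have hwalkT : ∀ z (hz1 : z ∈ G.closestUnion (k+1) v), z ∈ tier G k v →
      Tk1.walk z hz1 = P ++ [z] ∧ G.dist v z = G.dist v s₀ + G.w s₀ z := by
    intro z hz1 hzT
    obtain ⟨⟨hzR, hzU⟩, hzmin⟩ := hzT
    have hq := Tk1.minWeight z hz1
    have hqe := Tk1.ends z hz1
    have hqh := Tk1.fewHops z hz1
    have hhople : ((k+1 : ℕ) : ℕ∞) ≤ G.hopdist v z := by
      have h := htier_hop z ⟨⟨hzR, hzU⟩, hzmin⟩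
      exact_mod_cast h
    have hqlen : k + 1 ≤ (Tk1.walk z hz1).length := by
      have h : ((k+1:ℕ) : ℕ∞) ≤ ((Tk1.walk z hz1).length : ℕ∞) := by rw [hqh]; exact hhople
      exact_mod_cast h
    obtain ⟨hq'opt, hlt, hzR', hsum⟩ := hstep _ z hqe hq hzR.2 (by omega)
    have hz'U : (Tk1.walk z hz1).dropLast.getLastD v ∈ G.closestUnion k v := by
      by_contra h
      exact absurd hlt (not_lt.mpr (hzmin _ hzR' h))
    obtain ⟨n', hn'1, hn'len, _, hz'e, hhopz'⟩ := hUsubP _ hz'U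
    have hq'len : (Tk1.walk z hz1).dropLast.length = (Tk1.walk z hz1).length - 1 :=
      List.length_dropLast
    have hn'le : n' ≤ (Tk1.walk z hz1).length - 1 := by
      have h := hopdist_le G hzR'.2 (p := (Tk1.walk z hz1).dropLast) rfl hq'opt
      rw [hhopz', hq'len] at h
      exact_mod_cast h
    have hnew_w : G.walkWeight v (P.take n' ++ [z]) = G.dist v z := by
      rw [ww_append]
      have h1 : G.walkWeight v (P.take n')
          = G.dist v ((Tk1.walk z hz1).dropLast.getLastD v) := by rw [hz'e, hdiste]
      have h2 : G.walkWeight ((P.take n').getLastD v) [z]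
          = G.w ((Tk1.walk z hz1).dropLast.getLastD v) z := by
        rw [← hz'e]; simp [WGraph.walkWeight]
      rw [h1, h2, hsum]
    have hhopz_le : G.hopdist v z ≤ ((n' + 1 : ℕ) : ℕ∞) := by
      have h := hopdist_le G hzR.2 (getLastD_concat _ _ _) hnew_w
      rwa [List.length_append, List.length_take, min_eq_left (by omega : n' ≤ P.length),
        List.length_singleton] at h
    have hn'k : n' = k := by
      have h1 : (k+1 : ℕ) ≤ n' + 1 := by exact_mod_cast le_trans hhople hhopz_le
      omega
    have hz's : (Tk1.walk z hz1).dropLast.getLastD v = s₀ := by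
      rw [hz'e, hn'k, ← hlenk, List.take_length, hlast]
    have hqlen' : (Tk1.walk z hz1).length = k + 1 := by
      have h1 : ((Tk1.walk z hz1).length : ℕ∞) ≤ ((k+1:ℕ) : ℕ∞) := by
        rw [hqh, ← hn'k]; exact hhopz_le
      have h2 : (Tk1.walk z hz1).length ≤ k + 1 := by exact_mod_cast h1
      omega
    have hfin : (Tk1.walk z hz1).dropLast = P.take k := by
      have hself : (P.take k).getLastD v = s₀ := by rw [← hlenk, List.take_length, hlast]
      apply huniq k hk le_rfl
      · rw [hself, hz's]
      · rw [hself, ← hz's]; exact hq'opt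
      · rw [hq'len, hqlen']; omega
    have htakek : P.take k = P := by rw [← hlenk, List.take_length]
    have hqne : Tk1.walk z hz1 ≠ [] := by
      intro h
      rw [h] at hqlen
      simp at hqlen
    constructor
    · conv_lhs => rw [eq_dropLast_append (Tk1.walk z hz1) hqne v]
      rw [hqe, hfin, htakek]
    · have h := hsum
      rw [hz's] at h
      exact h.symm
  -- vertex sets
  have hVk : Tk.verts = insert v {y | y ∈ P} := by
    have hsets : {y | ∃ t ht, y ∈ Tk.walk t ht} = {y | y ∈ P} := by
      ext y
      constructor
      · rintro ⟨t, ht, hy⟩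
        exact (hpref t ht).sublist.subset hy
      · intro hy
        exact ⟨s₀, hs₀', hy⟩
    show insert v {y | ∃ t ht, y ∈ Tk.walk t ht} = _
    rw [hsets]
  have hVk1 : Tk1.verts = insert v ({y | y ∈ P} ∪ tier G k v) := by
    have hsets : {y | ∃ t ht, y ∈ Tk1.walk t ht} = {y | y ∈ P} ∪ tier G k v := by
      ext y
      constructor
      · rintro ⟨t, ht, hy⟩
        have ht' := ht
        rw [hUk1] at ht'
        rcases ht' with htU | htT
        · obtain ⟨n, _, _, hw, _⟩ := hwalkU t ht htU
          rw [hw] at hy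
          exact Or.inl (List.take_subset n P hy)
        · obtain ⟨hw, _⟩ := hwalkT t ht htT
          rw [hw] at hy
          rcases List.mem_append.mp hy with h | h
          · exact Or.inl h
          · rw [List.mem_singleton.mp h]
            exact Or.inr htT
      · intro hy
        rcases hy with hyP | hyT
        · have hyU : y ∈ G.closestUnion k v := by rw [hUPset]; exact hyP
          have hyU1 : y ∈ G.closestUnion (k+1) v := by rw [hUk1]; exact Or.inl hyU
          obtain ⟨n, hn1, _, hw, hze'⟩ := hwalkU y hyU1 hyU
          refine ⟨y, hyU1, ?_⟩
          rw [hw, hze']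
          exact getLastD_mem _ (htake_ne n hn1) v
        · have hyU1 : y ∈ G.closestUnion (k+1) v := by rw [hUk1]; exact Or.inr hyT
          obtain ⟨hw, _⟩ := hwalkT y hyU1 hyT
          exact ⟨y, hyU1, by
            rw [hw]
            exact List.mem_append.mpr (Or.inr (List.mem_singleton.mpr rfl))⟩
    show insert v {y | ∃ t ht, y ∈ Tk1.walk t ht} = _
    rw [hsets]
  have hvT : v ∉ tier G k v := fun h => h.1.1.1 rfl
  have hTP : ∀ y ∈ tier G k v, y ∉ ({y | y ∈ P} : Set V) := by
    intro y hy hyP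
    exact hy.1.2 (by rw [hUPset]; exact hyP)
  have hB : Tk1.verts \ Tk.verts = tier G k v := by
    rw [hVk, hVk1]
    ext y
    simp only [Set.mem_diff, Set.mem_insert_iff, Set.mem_union, Set.mem_setOf_eq]
    constructor
    · rintro ⟨h1, h2⟩
      push_neg at h2
      rcases h1 with rfl | h1
      · exact absurd rfl h2.1
      rcases h1 with h1 | h1
      · exact absurd h1 h2.2
      · exact h1
    · intro hy
      refine ⟨Or.inr (Or.inr hy), ?_⟩
      rintro (rfl | hP)
      · exact hvT hy
      · exact hTP y hy hP
  -- location of x on the path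
  have hxe : (P.take (k-1)).getLastD v = x := by
    have h1 : (v :: P).dropLast = l ++ [x] := by
      rw [hform, show l ++ [x, s₀] = (l ++ [x]) ++ [s₀] by simp]
      exact List.dropLast_concat
    obtain ⟨a, t, hat⟩ : ∃ a t, P = a :: t := by
      cases hP' : P with
      | nil => exact absurd hP' hPne
      | cons a t => exact ⟨a, t, rfl⟩
    have h2 : (v :: P).dropLast = v :: P.dropLast := by rw [hat]; rfl
    have h3 : P.dropLast.getLastD v = x := by
      have h4 := h1
      rw [h2] at h4
      have h5 := congrArg (fun t : List V => t.getLastD v) h4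
      rw [getLastD_cons, getLastD_append] at h5
      exact h5
    rw [← h3]
    congr 1
    rw [List.dropLast_eq_take, hlenk]
  have hdzx : G.dist v x = G.walkWeight v (P.take (k-1)) := by rw [← hxe, hdiste]
  have hdistx : G.dist v s₀ = G.dist v x + G.w x s₀ := by
    have hsplitP : P = P.take (k-1) ++ P.drop (k-1) := (List.take_append_drop _ _).symm
    have hdroplen : (P.drop (k-1)).length = 1 := by rw [List.length_drop]; omega
    obtain ⟨c, hc⟩ := List.length_eq_one_iff.mp hdroplen
    have hcu : c = s₀ := by
      have h := congrArg (fun t : List V => t.getLastD v) hsplitP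
      rw [getLastD_append, hc, hlast] at h
      exact h.symm
    rw [← hwP]
    conv_lhs => rw [hsplitP]
    rw [ww_append, hc, hcu, hxe, hdzx]
    simp [WGraph.walkWeight]
  have hxmem : x = v ∨ x ∈ G.closestUnion k v := by
    rcases Nat.eq_or_lt_of_le hk with h1 | h2
    · left
      have h0 : k - 1 = 0 := by omega
      rw [← hxe, h0]
      rfl
    · right
      rw [hUPset, ← hxe]
      exact he_mem (k-1) (by omega)
  -- segment facts
  have hseg : ∀ b, (b = v ∨ b ∈ G.closestUnion k v) → b ≠ x → b ≠ s₀ →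
      ∃ c, G.dist v b + (c + G.w x s₀) = G.dist v s₀ ∧ G.dist x b ≤ c := by
    intro b hb hbx hbu
    rcases hb with rfl | hbU
    · refine ⟨G.dist b x, ?_, ?_⟩
      · rw [dist_self, zero_add]
        exact hdistx.symm
      · rw [dist_symm G hsym]
    · obtain ⟨n, hn1, hnlen, _, hbe, _⟩ := hUsubP b hbU
      have hnk' : n ≠ k := by
        intro h
        apply hbu
        rw [hbe, h, ← hlenk, List.take_length, hlast]
      have hnk1 : n ≠ k - 1 := by
        intro h
        apply hbx
        rw [hbe, h, hxe]
      have hsplit : P.take (k-1) = P.take n ++ (P.take (k-1)).drop n := by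
        conv_lhs => rw [← List.take_append_drop n (P.take (k-1))]
        rw [List.take_take, min_eq_left (by omega : n ≤ k - 1)]
      have hsg_len : ((P.take (k-1)).drop n).length = k - 1 - n := by
        rw [List.length_drop, List.length_take]
        omega
      have hsg_ne : (P.take (k-1)).drop n ≠ [] := by
        intro h; rw [h] at hsg_len; simp at hsg_len; omega
      have hsg_last : ((P.take (k-1)).drop n).getLastD b = x := by
        have h := congrArg (fun t : List V => t.getLastD v) hsplit
        rw [getLastD_append, ← hbe, hxe] at h
        exact h.symm
      have h1 : G.walkWeight v (P.take n) = G.dist v b := by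
        rw [hbe]
        exact (hdiste n).symm
      have hwsg : G.dist v x = G.dist v b + G.walkWeight b ((P.take (k-1)).drop n) := by
        rw [hdzx]
        conv_lhs => rw [hsplit]
        rw [ww_append, ← hbe, h1]
      refine ⟨G.walkWeight b ((P.take (k-1)).drop n), ?_, ?_⟩
      · rw [← add_assoc, ← hwsg]
        exact hdistx.symm
      · have hsg_split : (P.take (k-1)).drop n = ((P.take (k-1)).drop n).dropLast ++ [x] := by
          conv_lhs => rw [eq_dropLast_append _ hsg_ne b]
          rw [hsg_last]
        have hends : WalkEnds x (((P.take (k-1)).drop n).dropLast.reverse ++ [b]) b :=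
          getLastD_concat _ _ _
        calc G.dist x b
            ≤ G.walkWeight x (((P.take (k-1)).drop n).dropLast.reverse ++ [b]) :=
              dist_le G hends
          _ = G.walkWeight b (((P.take (k-1)).drop n).dropLast ++ [x]) := ww_reverse G hsym _ _ _
          _ = G.walkWeight b ((P.take (k-1)).drop n) := by rw [← hsg_split]
  exact ⟨hB, htier_ne, fun w hw => (hwalkT w (by rw [hUk1]; exact Or.inr hw) hw).2,
    hdistx, hdu_ne, hxmem, hs₀', hseg⟩

lemma noclash (G : WGraph V) (hsym : G.Symm) (hpos : G.Positive) (u x i j w : V)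
    (hdx_i : G.dist i u = G.dist i x + G.w x u)
    (hdiu : G.dist i u ≠ ⊤)
    (hdiw : G.dist i w ≠ ⊤)
    (hdw : G.dist i w = G.dist i u + G.w u w)
    (hdju : G.dist j u ≠ ⊤)
    (hseg : ∃ c, G.dist j w + (c + G.w x u) = G.dist j u ∧ G.dist x w ≤ c) : False := by
  obtain ⟨c, hc1, hc2⟩ := hseg
  have hdix : G.dist i x ≠ ⊤ := by
    intro h
    rw [h, top_add] at hdx_i
    exact hdiu hdx_i
  have hwuw : G.w u w ≠ ⊤ := by
    intro h
    rw [h, add_top] at hdw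
    exact hdiw hdw
  have h2 : G.dist i x + (G.w x u + G.w u w) ≤ G.dist i x + c := by
    calc G.dist i x + (G.w x u + G.w u w) = G.dist i u + G.w u w := by rw [hdx_i, add_assoc]
      _ = G.dist i w := hdw.symm
      _ ≤ G.dist i x + G.dist x w := dist_triangle G i x w
      _ ≤ G.dist i x + c := add_le_add_right hc2 _
  have h3 : G.w x u + G.w u w ≤ c := (ENNReal.add_le_add_iff_left hdix).mp h2
  have hjw : G.dist j w ≠ ⊤ := by
    intro h
    rw [h, top_add] at hc1
    exact hdju hc1.symm
  have h4 : G.dist j u ≤ G.dist j w + G.w u w := by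
    have h := dist_le_add_w G j w u
    rwa [hsym w u] at h
  have h5 : G.dist j w + G.w u w < G.dist j u := by
    calc G.dist j w + G.w u w
        < (G.dist j w + G.w u w) + (G.w x u + G.w x u) :=
          ENNReal.lt_add_right (ENNReal.add_ne_top.mpr ⟨hjw, hwuw⟩)
            (lt_of_lt_of_le (hpos x u) le_self_add).ne'
      _ = G.dist j w + ((G.w x u + G.w u w) + G.w x u) := by ring
      _ ≤ G.dist j w + (c + G.w x u) := add_le_add_right (add_le_add_left h3 _) _
      _ = G.dist j u := hc1
  exact absurd (lt_of_le_of_lt h4 h5) (lt_irrefl _)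

lemma cross (G : WGraph V) (hsym : G.Symm) (hpos : G.Positive) (k : ℕ) (u x i j : V)
    (htdi : ∀ w ∈ tier G k i, G.dist i w = G.dist i u + G.w u w)
    (hdxi : G.dist i u = G.dist i x + G.w x u)
    (hdiu : G.dist i u ≠ ⊤)
    (hxmi : x = i ∨ x ∈ G.closestUnion k i)
    (humi : u ∈ G.closestUnion k i)
    (hsegi : ∀ b, (b = i ∨ b ∈ G.closestUnion k i) → b ≠ x → b ≠ u →
      ∃ c, G.dist i b + (c + G.w x u) = G.dist i u ∧ G.dist x b ≤ c)
    (htnej : (tier G k j).Nonempty)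
    (htdj : ∀ w ∈ tier G k j, G.dist j w = G.dist j u + G.w u w)
    (hdxj : G.dist j u = G.dist j x + G.w x u)
    (hdju : G.dist j u ≠ ⊤)
    (hxmj : x = j ∨ x ∈ G.closestUnion k j)
    (humj : u ∈ G.closestUnion k j)
    (hsegj : ∀ b, (b = j ∨ b ∈ G.closestUnion k j) → b ≠ x → b ≠ u →
      ∃ c, G.dist j b + (c + G.w x u) = G.dist j u ∧ G.dist x b ≤ c) :
    tier G k i ⊆ tier G k j := by
  intro w hw
  obtain ⟨⟨hwR, hwU⟩, hwmin⟩ := hw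
  have hdw := htdi w ⟨⟨hwR, hwU⟩, hwmin⟩
  have hdiw : G.dist i w ≠ ⊤ := hwR.2
  have hwuw : G.w u w ≠ ⊤ := by intro h; rw [h, add_top] at hdw; exact hdiw hdw
  have hwx : w ≠ x := by
    rcases hxmi with h | hxU
    · exact fun hh => hwR.1 (hh.trans h)
    · exact fun hh => hwU (hh ▸ hxU)
  have hwu : w ≠ u := fun hh => hwU (hh ▸ humi)
  have hnotj : ¬ (w = j ∨ w ∈ G.closestUnion k j) := by
    intro hb
    exact noclash G hsym hpos u x i j w hdxi hdiu hdiw hdw hdju (hsegj w hb hwx hwu)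
  push_neg at hnotj
  have hwRj : w ∈ G.Reach j := by
    refine ⟨hnotj.1, ?_⟩
    intro h
    have hle := dist_le_add_w G j u w
    rw [h] at hle
    exact (ENNReal.add_ne_top.mpr ⟨hdju, hwuw⟩) (top_le_iff.mp hle)
  obtain ⟨w', hw'⟩ := htnej
  obtain ⟨⟨hw'R, hw'U⟩, hw'min⟩ := hw'
  have hdw' := htdj w' ⟨⟨hw'R, hw'U⟩, hw'min⟩
  have hdjw' : G.dist j w' ≠ ⊤ := hw'R.2
  have hwuw' : G.w u w' ≠ ⊤ := by intro h; rw [h, add_top] at hdw'; exact hdjw' hdw'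
  have hw'x : w' ≠ x := by
    rcases hxmj with h | hxU
    · exact fun hh => hw'R.1 (hh.trans h)
    · exact fun hh => hw'U (hh ▸ hxU)
  have hw'u : w' ≠ u := fun hh => hw'U (hh ▸ humj)
  have hnoti : ¬ (w' = i ∨ w' ∈ G.closestUnion k i) := by
    intro hb
    exact noclash G hsym hpos u x j i w' hdxj hdju hdjw' hdw' hdiu (hsegi w' hb hw'x hw'u)
  push_neg at hnoti
  have hw'Ri : w' ∈ G.Reach i := by
    refine ⟨hnoti.1, ?_⟩
    intro h
    have hle := dist_le_add_w G i u w'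
    rw [h] at hle
    exact (ENNReal.add_ne_top.mpr ⟨hdiu, hwuw'⟩) (top_le_iff.mp hle)
  have hmini : G.dist i w ≤ G.dist i w' := hwmin w' hw'Ri hnoti.2
  have hlew : G.w u w ≤ G.w u w' := by
    have h1 : G.dist i u + G.w u w ≤ G.dist i u + G.w u w' := by
      rw [← hdw]
      exact le_trans hmini (dist_le_add_w G i u w')
    exact (ENNReal.add_le_add_iff_left hdiu).mp h1
  have hdjw_le : G.dist j w ≤ G.dist j w' := by
    calc G.dist j w ≤ G.dist j u + G.w u w := dist_le_add_w G j u w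
      _ ≤ G.dist j u + G.w u w' := add_le_add_right hlew _
      _ = G.dist j w' := hdw'.symm
  exact ⟨⟨hwRj, hnotj.2⟩, fun y hyR hyU => le_trans hdjw_le (hw'min y hyR hyU)⟩

end Stmt8Aux

/-- if `i` and `j` both lack a `(k,k+1)`-ball and their `k`-constrained
shortest path trees are paths ending with second-to-last vertex `x` and last vertex
`u`, then their tiebreaking candidate sets `B(i)` and `B(j)` — the vertices of the
`(k+1)`-constrained tree not in the `k`-constrained tree — coincide. -/
theorem stmt8 {V : Type*} [Finite V] [DecidableEq V] (G : WGraph V)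
    (hsym : G.Symm) (hpos : G.Positive) (k : ℕ) (hk : 1 ≤ k) (u x : V) (hux : u ≠ x)
    (i j : V) (hi : ¬ G.HasBall k (k + 1) i) (hj : ¬ G.HasBall k (k + 1) j)
    (Tki : FHTree G i (G.closestUnion k i))
    (Tk1i : FHTree G i (G.closestUnion (k + 1) i))
    (Tkj : FHTree G j (G.closestUnion k j))
    (Tk1j : FHTree G j (G.closestUnion (k + 1) j))
    (hiEnd : ∃ s hs, (∃ l, i :: Tki.walk s hs = l ++ [x, u]) ∧
      ∀ t ht, Tki.walk t ht <+: Tki.walk s hs)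
    (hjEnd : ∃ s hs, (∃ l, j :: Tkj.walk s hs = l ++ [x, u]) ∧
      ∀ t ht, Tkj.walk t ht <+: Tkj.walk s hs) :
    Tk1i.verts \ Tki.verts = Tk1j.verts \ Tkj.verts := by
  obtain ⟨hBi, htnei, htdi, hdxi, hdiu, hxmi, humi, hsegi⟩ :=
    Stmt8Aux.perVertex G hsym hpos k hk u x i hi Tki Tk1i hiEnd
  obtain ⟨hBj, htnej, htdj, hdxj, hdju, hxmj, humj, hsegj⟩ :=
    Stmt8Aux.perVertex G hsym hpos k hk u x j hj Tkj Tk1j hjEnd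
  rw [hBi, hBj]
  apply Set.Subset.antisymm
  · exact Stmt8Aux.cross G hsym hpos k u x i j htdi hdxi hdiu hxmi humi hsegi
      htnej htdj hdxj hdju hxmj humj hsegj
  · exact Stmt8Aux.cross G hsym hpos k u x j i htdj hdxj hdju hxmj humj hsegj
      htnei htdi hdxi hdiu hxmi humi hsegi
end
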